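/- arXiv:1903.09793 — 10 statements merged into one kernel-verified Lean document; each statement's English description precedes it below -/
import Mathlib

section
/- Let f : ℝ^N_+ → ℝ_+ be a concave function on the nonnegative orthant. Then f is monotone (0 ≤ x ≤ y coordinatewise implies f(x) ≤ f(y)) and weakly scalable (f(αx) ≤ α f(x) for all x ∈ ℝ^N_+ and α ≥ 1); hence f is a weakly standard interference (WSI) function. If moreover f is positive, i.e., f(x) > 0 for every x ∈ ℝ^N_+, then f is scalable (f(αx) < α f(x) for all x ∈ ℝ^N_+ and α > 1); hence f is a standard interference (SI) function. -/
open Filter Topology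

/-!
Writing `x = α⁻¹ • (α • x) + (1 - α⁻¹) • 0`, concavity gives
`f (α • x) + (α - 1) * f 0 ≤ α * f x`, which yields weak scalability from `f 0 ≥ 0` and
scalability from `f 0 > 0`. For monotonicity, `y = t⁻¹ • (x + t • (y - x)) + (1 - t⁻¹) • x` for
`t ≥ 1`; since `f ≥ 0` on the ray, concavity gives `f x - f y ≤ f x / t`, and `t → ∞`.
-/

section Concave

variable {E : Type*} [AddCommGroup E] [Module ℝ E] {s : Set E} {f : E → ℝ}

theorem ConcaveOn.map_smul_add_mul_map_zero_le (hf : ConcaveOn ℝ s f) (h0 : (0 : E) ∈ s)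
    {x : E} {α : ℝ} (hαx : α • x ∈ s) (hα : 1 ≤ α) :
    f (α • x) + (α - 1) * f 0 ≤ α * f x := by
  have hα₀ : 0 < α := zero_lt_one.trans_le hα
  have hcomb : α⁻¹ • (α • x) + (1 - α⁻¹) • (0 : E) = x := by
    rw [smul_smul, inv_mul_cancel₀ hα₀.ne', one_smul, smul_zero, add_zero]
  have hconc := hf.2 hαx h0 (inv_nonneg.2 hα₀.le) (sub_nonneg.2 (inv_le_one_of_one_le₀ hα))
    (add_sub_cancel _ _)
  rw [hcomb, smul_eq_mul, smul_eq_mul] at hconc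
  calc f (α • x) + (α - 1) * f 0 = α * (α⁻¹ * f (α • x) + (1 - α⁻¹) * f 0) := by
        field_simp
    _ ≤ α * f x := mul_le_mul_of_nonneg_left hconc hα₀.le

theorem ConcaveOn.le_map_add_of_ray (hf : ConcaveOn ℝ s f) {x d : E}
    (hray : ∀ t : ℝ, 0 ≤ t → x + t • d ∈ s) (hnn : ∀ t : ℝ, 0 ≤ t → 0 ≤ f (x + t • d)) :
    f x ≤ f (x + d) := by
  have hbound : ∀ t : ℝ, 1 ≤ t → f x - f (x + d) ≤ f x / t := by
    intro t ht
    have ht₀ : 0 < t := zero_lt_one.trans_le ht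
    have hcomb : t⁻¹ • (x + t • d) + (1 - t⁻¹) • x = x + d := by
      rw [smul_add, smul_smul, inv_mul_cancel₀ ht₀.ne', one_smul, sub_smul, one_smul]
      abel
    have hconc := hf.2 (hray t ht₀.le) (by simpa using hray 0 le_rfl)
      (inv_nonneg.2 ht₀.le) (sub_nonneg.2 (inv_le_one_of_one_le₀ ht)) (add_sub_cancel _ _)
    rw [hcomb, smul_eq_mul, smul_eq_mul] at hconc
    have := mul_nonneg (inv_nonneg.2 ht₀.le) (hnn t ht₀.le)
    rw [div_eq_inv_mul]
    linarith
  have hlim : Tendsto (fun t : ℝ => f x / t) atTop (𝓝 0) :=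
    tendsto_const_nhds.div_atTop tendsto_id
  exact sub_nonpos.1 <| ge_of_tendsto hlim <| eventually_atTop.2 ⟨1, hbound⟩

end Concave

/-- A nonnegative concave function on the nonnegative orthant is
monotone and weakly scalable (hence WSI); if moreover positive, it is scalable
(hence SI). -/
theorem stmt0 {N : ℕ} (f : (Fin N → ℝ) → ℝ)
    (hnn : ∀ x : Fin N → ℝ, 0 ≤ x → 0 ≤ f x)
    (hconc : ConcaveOn ℝ {x : Fin N → ℝ | 0 ≤ x} f) :
    ((∀ x y : Fin N → ℝ, 0 ≤ x → x ≤ y → f x ≤ f y) ∧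
      (∀ x : Fin N → ℝ, 0 ≤ x → ∀ α : ℝ, 1 ≤ α → f (α • x) ≤ α * f x)) ∧
    ((∀ x : Fin N → ℝ, 0 ≤ x → 0 < f x) →
      (∀ x : Fin N → ℝ, 0 ≤ x → ∀ α : ℝ, 1 < α → f (α • x) < α * f x)) := by
  have hray : ∀ x y : Fin N → ℝ, 0 ≤ x → x ≤ y → ∀ t : ℝ, 0 ≤ t → 0 ≤ x + t • (y - x) :=
    fun x y hx hxy t ht => add_nonneg hx (smul_nonneg ht (sub_nonneg.2 hxy))
  have hscale : ∀ x : Fin N → ℝ, 0 ≤ x → ∀ α : ℝ, 1 ≤ α →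
      f (α • x) + (α - 1) * f 0 ≤ α * f x := fun x hx α hα =>
    hconc.map_smul_add_mul_map_zero_le (le_refl (0 : Fin N → ℝ))
      (smul_nonneg (zero_le_one.trans hα) hx) hα
  refine ⟨⟨fun x y hx hxy => ?_, fun x hx α hα => ?_⟩, fun hpos x hx α hα => ?_⟩
  · simpa using hconc.le_map_add_of_ray (hray x y hx hxy) fun t ht => hnn _ (hray x y hx hxy t ht)
  · linarith [hscale x hx α hα, mul_nonneg (sub_nonneg.2 hα) (hnn 0 le_rfl)]
  · linarith [hscale x hx α hα.le, mul_pos (sub_pos.2 hα) (hpos 0 le_rfl)]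
end

section
/- Let f : ℝ^N_+ → ℝ_+ be a WSI function. Then for every x ∈ ℝ^N_+ the limit lim_{h→∞} f(hx)/h exists and is a nonnegative real number (i.e., the function h ↦ f(hx)/h converges as h → ∞). -/
open Filter Topology

/-! Weak scalability with `α = b / a` applied at the point `a • x` gives `f (b • x) ≤ (b / a) f (a • x)`,
so `h ↦ f (h • x) / h` is antitone on `[1, ∞)`. It is also nonnegative there, hence converges to its
infimum. -/

theorem AntitoneOn.exists_tendsto_atTop_of_le {α β : Type*} [LinearOrder α]
    [ConditionallyCompleteLinearOrder β] [TopologicalSpace β] [OrderTopology β]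
    {φ : α → β} {a : α} {b : β} (hφ : AntitoneOn φ (Set.Ici a)) (hb : ∀ t, a ≤ t → b ≤ φ t) :
    ∃ L, b ≤ L ∧ Tendsto φ atTop (𝓝 L) := by
  have : Nonempty α := ⟨a⟩
  set G : α → β := fun t => φ (max t a)
  have hG : Antitone G := fun s t hst =>
    hφ (le_max_right s a) (le_max_right t a) (max_le_max_right a hst)
  have hbG : ∀ t, b ≤ G t := fun t => hb _ (le_max_right t a)
  refine ⟨⨅ t, G t, le_ciInf hbG, ?_⟩
  refine (tendsto_atTop_ciInf hG ⟨b, Set.forall_mem_range.2 hbG⟩).congr' ?_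
  filter_upwards [eventually_ge_atTop a] with t ht
  simp only [G, max_eq_left ht]

theorem antitoneOn_apply_smul_div {N : ℕ} {f : (Fin N → ℝ) → ℝ}
    (hws : ∀ x : Fin N → ℝ, 0 ≤ x → ∀ α : ℝ, 1 ≤ α → f (α • x) ≤ α * f x)
    {x : Fin N → ℝ} (hx : 0 ≤ x) :
    AntitoneOn (fun h : ℝ => f (h • x) / h) (Set.Ici 1) := by
  intro a (ha : 1 ≤ a) b (hb : 1 ≤ b) hab
  have ha0 : 0 < a := one_pos.trans_le ha
  have hscale : f (b • x) ≤ b / a * f (a • x) := by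
    simpa only [smul_smul, div_mul_cancel₀ b ha0.ne'] using
      hws (a • x) (smul_nonneg ha0.le hx) (b / a) ((one_le_div ha0).2 hab)
  calc f (b • x) / b ≤ b / a * f (a • x) / b := by gcongr
    _ = f (a • x) / a := by field_simp

theorem stmt2_general {N : ℕ} (f : (Fin N → ℝ) → ℝ)
    (hnn : ∀ x : Fin N → ℝ, 0 ≤ x → 0 ≤ f x)
    (hws : ∀ x : Fin N → ℝ, 0 ≤ x → ∀ α : ℝ, 1 ≤ α → f (α • x) ≤ α * f x)
    (x : Fin N → ℝ) (hx : 0 ≤ x) :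
    ∃ L : ℝ, 0 ≤ L ∧ Tendsto (fun h : ℝ => f (h • x) / h) atTop (nhds L) :=
  (antitoneOn_apply_smul_div hws hx).exists_tendsto_atTop_of_le fun h (h1 : 1 ≤ h) =>
    div_nonneg (hnn _ (smul_nonneg (zero_le_one.trans h1) hx)) (zero_le_one.trans h1)

/-- For a WSI function f and every x in the nonnegative orthant,
the limit lim_{h→∞} f(hx)/h exists and is a nonnegative real. -/
theorem stmt2 {N : ℕ} (f : (Fin N → ℝ) → ℝ)
    (hnn : ∀ x : Fin N → ℝ, 0 ≤ x → 0 ≤ f x)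
    (hmono : ∀ x y : Fin N → ℝ, 0 ≤ x → x ≤ y → f x ≤ f y)
    (hws : ∀ x : Fin N → ℝ, 0 ≤ x → ∀ α : ℝ, 1 ≤ α → f (α • x) ≤ α * f x)
    (x : Fin N → ℝ) (hx : 0 ≤ x) :
    ∃ L : ℝ, 0 ≤ L ∧ Tendsto (fun h : ℝ => f (h • x) / h) atTop (nhds L) :=
  stmt2_general f hnn hws x hx
end

section
/- Let f : ℝ^N_+ → ℝ_+ be a WSI function and x ∈ ℝ^N_+, and let f_∞(x) := lim_{h→∞} f(hx)/h (this limit exists). Then for every sequence (x_n) ⊂ ℝ^N_+ with x_n → x and every sequence (h_n) ⊂ ℝ_{++} with h_n → ∞, liminf_{n→∞} f(h_n x_n)/h_n ≥ f_∞(x). Consequently, the infimum of liminf_{n→∞} f(h_n x_n)/h_n over all such pairs of sequences equals f_∞(x) (it is attained by the constant sequence x_n = x), i.e., the asymptotic function of f at x coincides with the ray limit lim_{h→∞} f(hx)/h. -/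
open Filter Topology Set

/-!
Fix `t ∈ (0, 1)`. Since `x ≥ 0` and `x_n → x`, eventually `t • x ≤ x_n`, so by monotonicity
`f (h_n • x_n) / h_n ≥ f ((t h_n) • x) / h_n = t · f ((t h_n) • x) / (t h_n) → t L`.
Hence the liminf is at least `t L` for every `t < 1`, and letting `t → 1` gives `L`.
The constant sequence `x_n = x`, `h_n = n + 1` attains `L`, which identifies the infimum.
-/

theorem eventually_smul_le_of_tendsto {ι α : Type*} [Finite ι] {l : Filter α}
    {xn : α → ι → ℝ} {x : ι → ℝ} (hxn : ∀ n, 0 ≤ xn n) (hx : 0 ≤ x)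
    (h : Tendsto xn l (𝓝 x)) {t : ℝ} (ht : t < 1) : ∀ᶠ n in l, t • x ≤ xn n := by
  simp only [Pi.le_def, Pi.smul_apply, smul_eq_mul, eventually_all]
  intro i
  rcases (show (0 : ℝ) ≤ x i from hx i).eq_or_lt with hxi | hxi
  · exact Eventually.of_forall fun n => by simpa [← hxi] using hxn n i
  · exact (tendsto_pi_nhds.1 h i).eventually (eventually_ge_nhds (by nlinarith))

theorem EReal.coe_le_liminf_of_tendsto {α : Type*} {l : Filter α} [l.NeBot] {u v : α → ℝ}
    {a : ℝ} (hv : Tendsto v l (𝓝 a)) (hvu : v ≤ᶠ[l] u) :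
    (a : EReal) ≤ liminf (fun n => (u n : EReal)) l := by
  rw [← ((continuous_coe_real_ereal.tendsto a).comp hv).liminf_eq]
  exact liminf_le_liminf (hvu.mono fun n h => EReal.coe_le_coe_iff.2 h)

variable {ι : Type*} {f : (ι → ℝ) → ℝ} {x : ι → ℝ} {L : ℝ}

theorem MonotoneOn.le_liminf_div_of_tendsto_ray [Finite ι] {α : Type*} {l : Filter α} [l.NeBot]
    (hf : MonotoneOn f (Ici 0)) (hx : 0 ≤ x)
    (hlim : Tendsto (fun h : ℝ => f (h • x) / h) atTop (𝓝 L))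
    {xn : α → ι → ℝ} {hn : α → ℝ} (hxn0 : ∀ n, 0 ≤ xn n) (hxn : Tendsto xn l (𝓝 x))
    (hhn0 : ∀ n, 0 < hn n) (hhn : Tendsto hn l atTop) :
    (L : EReal) ≤ liminf (fun n => ((f (hn n • xn n) / hn n : ℝ) : EReal)) l := by
  have bound : ∀ t ∈ Ioo (0 : ℝ) 1,
      ((t * L : ℝ) : EReal) ≤ liminf (fun n => ((f (hn n • xn n) / hn n : ℝ) : EReal)) l := by
    rintro t ⟨ht0, ht1⟩
    have hray : Tendsto (fun n => f ((t * hn n) • x) / hn n) l (𝓝 (t * L)) := by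
      refine ((hlim.comp (hhn.const_mul_atTop ht0)).const_mul t).congr fun n => ?_
      have := (hhn0 n).ne'
      simp only [Function.comp_apply]
      field_simp
    refine EReal.coe_le_liminf_of_tendsto hray ?_
    filter_upwards [eventually_smul_le_of_tendsto hxn0 hx hxn ht1] with n hn_le
    refine div_le_div_of_nonneg_right (hf (smul_nonneg (by nlinarith [hhn0 n]) hx)
      (smul_nonneg (hhn0 n).le (hxn0 n)) ?_) (hhn0 n).le
    rw [mul_comm, mul_smul]
    exact smul_le_smul_of_nonneg_left hn_le (hhn0 n).le
  have hcoe : Tendsto (fun t : ℝ => ((t * L : ℝ) : EReal)) (𝓝[<] 1) (𝓝 (L : EReal)) := by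
    refine (continuous_coe_real_ereal.tendsto L).comp ?_
    exact ((continuous_id.mul continuous_const).tendsto' 1 L (one_mul L)).mono_left
      nhdsWithin_le_nhds
  refine le_of_tendsto hcoe ?_
  filter_upwards [Ioo_mem_nhdsLT (zero_lt_one' ℝ)] with t ht using bound t ht

theorem stmt3_general {N : ℕ} (f : (Fin N → ℝ) → ℝ)
    (hmono : ∀ x y : Fin N → ℝ, 0 ≤ x → x ≤ y → f x ≤ f y)
    (x : Fin N → ℝ) (hx : 0 ≤ x) (L : ℝ)
    (hlim : Tendsto (fun h : ℝ => f (h • x) / h) atTop (nhds L)) :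
    (∀ (xn : ℕ → Fin N → ℝ) (hn : ℕ → ℝ),
        (∀ n, 0 ≤ xn n) → Tendsto xn atTop (nhds x) →
        (∀ n, 0 < hn n) → Tendsto hn atTop atTop →
        (L : EReal) ≤
          Filter.liminf (fun n => ((f (hn n • xn n) / hn n : ℝ) : EReal)) atTop) ∧
    sInf {v : EReal | ∃ (xn : ℕ → Fin N → ℝ) (hn : ℕ → ℝ),
        (∀ n, 0 ≤ xn n) ∧ Tendsto xn atTop (nhds x) ∧
        (∀ n, 0 < hn n) ∧ Tendsto hn atTop atTop ∧
        v = Filter.liminf (fun n => ((f (hn n • xn n) / hn n : ℝ) : EReal)) atTop}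
      = (L : EReal) := by
  have hf : MonotoneOn f (Ici 0) := fun a ha _ _ hab => hmono _ _ ha hab
  refine ⟨fun _ _ hxn0 hxn hhn0 hhn => hf.le_liminf_div_of_tendsto_ray hx hlim hxn0 hxn hhn0 hhn,
    le_antisymm (sInf_le ?_) (le_sInf ?_)⟩
  · have hn : Tendsto (fun n : ℕ => (n : ℝ) + 1) atTop atTop :=
      tendsto_atTop_add_const_right _ _ tendsto_natCast_atTop_atTop
    refine ⟨fun _ => x, fun n => (n : ℝ) + 1, fun _ => hx, tendsto_const_nhds,
      fun n => by positivity, hn, ?_⟩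
    exact (((continuous_coe_real_ereal.tendsto L).comp (hlim.comp hn)).liminf_eq).symm
  · rintro v ⟨xn, hn, hxn0, hxn, hhn0, hhn, rfl⟩
    exact hf.le_liminf_div_of_tendsto_ray hx hlim hxn0 hxn hhn0 hhn

/-- For a WSI function f and x in the nonnegative orthant, writing
f_∞(x) = lim_{h→∞} f(hx)/h = L, every sequence x_n → x in the orthant and
h_n → ∞ with h_n > 0 satisfies liminf f(h_n x_n)/h_n ≥ L; consequently the
infimum over all such sequences of this liminf (the asymptotic function of f
at x) equals L. -/
theorem stmt3 {N : ℕ} (f : (Fin N → ℝ) → ℝ)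
    (hnn : ∀ x : Fin N → ℝ, 0 ≤ x → 0 ≤ f x)
    (hmono : ∀ x y : Fin N → ℝ, 0 ≤ x → x ≤ y → f x ≤ f y)
    (hws : ∀ x : Fin N → ℝ, 0 ≤ x → ∀ α : ℝ, 1 ≤ α → f (α • x) ≤ α * f x)
    (x : Fin N → ℝ) (hx : 0 ≤ x) (L : ℝ)
    (hlim : Tendsto (fun h : ℝ => f (h • x) / h) atTop (nhds L)) :
    (∀ (xn : ℕ → Fin N → ℝ) (hn : ℕ → ℝ),
        (∀ n, 0 ≤ xn n) → Tendsto xn atTop (nhds x) →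
        (∀ n, 0 < hn n) → Tendsto hn atTop atTop →
        (L : EReal) ≤
          Filter.liminf (fun n => ((f (hn n • xn n) / hn n : ℝ) : EReal)) atTop) ∧
    sInf {v : EReal | ∃ (xn : ℕ → Fin N → ℝ) (hn : ℕ → ℝ),
        (∀ n, 0 ≤ xn n) ∧ Tendsto xn atTop (nhds x) ∧
        (∀ n, 0 < hn n) ∧ Tendsto hn atTop atTop ∧
        v = Filter.liminf (fun n => ((f (hn n • xn n) / hn n : ℝ) : EReal)) atTop}
      = (L : EReal) :=
  stmt3_general f hmono x hx L hlim
end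

section
/- Let f : ℝ^N_+ → ℝ_+ be a WSI function and define f_∞ : ℝ^N_+ → ℝ_+ by f_∞(x) = lim_{h→∞} f(hx)/h (this limit exists). Then f_∞ is positively homogeneous on ℝ^N_+, i.e., f_∞(αx) = α f_∞(x) for all x ∈ ℝ^N_+ and α ≥ 0. If in addition f is continuous on ℝ^N_+, then f_∞ is continuous on ℝ^N_+. -/
/-!
Weak scalability makes `h ↦ f (h • x) / h` antitone on `(0, ∞)`, so `F x` is the infimum of these
quotients; as an infimum of continuous functions `F` is upper semicontinuous. Homogeneity is a
change of variable `h ↦ α h` in the limit, and together with monotonicity it gives lower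
semicontinuity: near `x`, every `y` in the orthant dominates `l • x` for a fixed `l < 1`, so
`F y ≥ l * F x`.
-/

open Filter Topology Set

section Asymptotic

variable {E : Type*} [AddCommGroup E] [Module ℝ E] {f : E → ℝ}

theorem eq_zero_of_tendsto_smul_zero_div {c : ℝ}
    (hc : Tendsto (fun h : ℝ => f (h • (0 : E)) / h) atTop (𝓝 c)) : c = 0 := by
  simp only [smul_zero] at hc
  exact tendsto_nhds_unique hc (tendsto_const_nhds.div_atTop tendsto_id)

theorem Filter.Tendsto.smul_smul_div {x : E} {c α : ℝ}
    (hx : Tendsto (fun h : ℝ => f (h • x) / h) atTop (𝓝 c)) (hα : 0 < α) :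
    Tendsto (fun h : ℝ => f (h • α • x) / h) atTop (𝓝 (α * c)) := by
  refine ((hx.comp (tendsto_id.atTop_mul_const hα)).const_mul α).congr' ?_
  filter_upwards [eventually_gt_atTop 0] with h hh
  simp only [Function.comp_apply, id, smul_smul]
  field_simp

theorem eq_mul_of_tendsto_smul_div {x : E} {α c d : ℝ}
    (hx : Tendsto (fun h : ℝ => f (h • x) / h) atTop (𝓝 c))
    (hαx : Tendsto (fun h : ℝ => f (h • α • x) / h) atTop (𝓝 d)) (hα : 0 ≤ α) :
    d = α * c := by
  rcases hα.eq_or_lt with rfl | hα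
  · simp only [zero_smul] at hαx
    rw [eq_zero_of_tendsto_smul_zero_div hαx, zero_mul]
  · exact tendsto_nhds_unique hαx (hx.smul_smul_div hα)

variable [PartialOrder E] [PosSMulMono ℝ E]

theorem antitoneOn_smul_div (hws : ∀ x : E, 0 ≤ x → ∀ α : ℝ, 1 ≤ α → f (α • x) ≤ α * f x)
    {x : E} (hx : 0 ≤ x) : AntitoneOn (fun h : ℝ => f (h • x) / h) (Ioi 0) := by
  intro h (hh : 0 < h) h' (hh' : 0 < h') hhh'
  have hscale := hws (h • x) (smul_nonneg hh.le hx) (h' / h) ((one_le_div hh).2 hhh')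
  rw [smul_smul, div_mul_cancel₀ _ hh.ne'] at hscale
  calc f (h' • x) / h' ≤ h' / h * f (h • x) / h' := by gcongr
    _ = f (h • x) / h := by field_simp

theorem le_smul_div_of_tendsto (hws : ∀ x : E, 0 ≤ x → ∀ α : ℝ, 1 ≤ α → f (α • x) ≤ α * f x)
    {x : E} (hx : 0 ≤ x) {c : ℝ} (hc : Tendsto (fun h : ℝ => f (h • x) / h) atTop (𝓝 c))
    {h : ℝ} (hh : 0 < h) : c ≤ f (h • x) / h := by
  refine le_of_tendsto hc ?_
  filter_upwards [eventually_ge_atTop h] with h' hhh'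
  exact antitoneOn_smul_div hws hx hh (hh.trans_le hhh') hhh'

theorem monotoneOn_of_tendsto_smul_div (hmono : ∀ x y : E, 0 ≤ x → x ≤ y → f x ≤ f y)
    {F : E → ℝ} (hF : ∀ x : E, 0 ≤ x → Tendsto (fun h : ℝ => f (h • x) / h) atTop (𝓝 (F x))) :
    MonotoneOn F (Ici 0) := by
  intro x (hx : 0 ≤ x) y (hy : 0 ≤ y) hxy
  refine le_of_tendsto_of_tendsto (hF x hx) (hF y hy) ?_
  filter_upwards [eventually_gt_atTop 0] with h hh
  gcongr
  exact hmono _ _ (smul_nonneg hh.le hx) (smul_le_smul_of_nonneg_left hxy hh.le)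

end Asymptotic

theorem upperSemicontinuousWithinAt_of_tendsto_of_le {X ι : Type*} [TopologicalSpace X]
    {F : X → ℝ} {g : ι → X → ℝ} {l : Filter ι} [l.NeBot] {s : Set X} {x : X}
    (hle : ∀ᶠ i in l, ∀ y ∈ s, F y ≤ g i y) (hg : ∀ᶠ i in l, ContinuousWithinAt (g i) s x)
    (hlim : Tendsto (fun i => g i x) l (𝓝 (F x))) :
    UpperSemicontinuousWithinAt F s x := by
  intro a ha
  obtain ⟨i, hlei, hgi, hgia⟩ := (hle.and (hg.and (hlim.eventually_lt_const ha))).exists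
  filter_upwards [hgi.eventually_lt_const hgia, self_mem_nhdsWithin] with y hya hy
  exact (hlei y hy).trans_lt hya

theorem eventually_smul_le_nhdsWithin_Ici {ι : Type*} [Finite ι] {x : ι → ℝ} (hx : 0 ≤ x)
    {l : ℝ} (hl : l < 1) : ∀ᶠ y in 𝓝[Ici 0] x, l • x ≤ y := by
  refine eventually_all.2 fun i => ?_
  rcases (hx i).eq_or_lt with hxi | hxi
  · filter_upwards [self_mem_nhdsWithin] with y (hy : 0 ≤ y)
    simpa [← hxi] using hy i
  · have hlt : l * x i < x i := mul_lt_of_lt_one_left hxi hl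
    exact (Tendsto.eventually_const_lt hlt
      ((continuous_apply i).continuousWithinAt (s := Ici 0) (x := x))).mono fun y hy => hy.le

theorem lowerSemicontinuousWithinAt_of_monotoneOn_of_smul {ι : Type*} [Finite ι]
    {F : (ι → ℝ) → ℝ} (hmono : MonotoneOn F (Ici 0)) {x : ι → ℝ} (hx : 0 ≤ x)
    (hhom : ∀ l : ℝ, 0 ≤ l → F (l • x) = l * F x) : LowerSemicontinuousWithinAt F (Ici 0) x := by
  intro a ha
  have hFx : 0 ≤ F x := calc
    0 = F ((0 : ℝ) • x) := by rw [hhom 0 le_rfl, zero_mul]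
    _ ≤ F x := hmono (smul_nonneg le_rfl hx) hx (by rw [zero_smul]; exact hx)
  have hlim : Tendsto (fun l : ℝ => l * F x) (𝓝[<] 1) (𝓝 (F x)) := by
    simpa using ((continuous_mul_const (F x)).tendsto 1).mono_left nhdsWithin_le_nhds
  obtain ⟨l, hal, hl0, hl1⟩ :=
    ((hlim.eventually_const_lt ha).and (Ico_mem_nhdsLT (zero_lt_one' ℝ))).exists
  filter_upwards [eventually_smul_le_nhdsWithin_Ici hx hl1, self_mem_nhdsWithin] with y hy hy0
  calc a < l * F x := hal
    _ = F (l • x) := (hhom l hl0).symm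
    _ ≤ F y := hmono (smul_nonneg hl0 hx) hy0 hy

theorem stmt4_general {N : ℕ} (f : (Fin N → ℝ) → ℝ)
    (hmono : ∀ x y : Fin N → ℝ, 0 ≤ x → x ≤ y → f x ≤ f y)
    (hws : ∀ x : Fin N → ℝ, 0 ≤ x → ∀ α : ℝ, 1 ≤ α → f (α • x) ≤ α * f x)
    (F : (Fin N → ℝ) → ℝ)
    (hF : ∀ x : Fin N → ℝ, 0 ≤ x →
      Tendsto (fun h : ℝ => f (h • x) / h) atTop (nhds (F x))) :
    (∀ x : Fin N → ℝ, 0 ≤ x → ∀ α : ℝ, 0 ≤ α → F (α • x) = α * F x) ∧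
    (ContinuousOn f {x : Fin N → ℝ | 0 ≤ x} →
      ContinuousOn F {x : Fin N → ℝ | 0 ≤ x}) := by
  have hhom : ∀ x : Fin N → ℝ, 0 ≤ x → ∀ α : ℝ, 0 ≤ α → F (α • x) = α * F x :=
    fun x hx α hα => eq_mul_of_tendsto_smul_div (hF x hx) (hF _ (smul_nonneg hα hx)) hα
  refine ⟨hhom, fun hfc x (hx : 0 ≤ x) => ?_⟩
  refine continuousWithinAt_iff_lower_upperSemicontinuousWithinAt.2
    ⟨lowerSemicontinuousWithinAt_of_monotoneOn_of_smul
      (monotoneOn_of_tendsto_smul_div hmono hF) hx (hhom x hx), ?_⟩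
  refine upperSemicontinuousWithinAt_of_tendsto_of_le (l := atTop) (g := fun h y => f (h • y) / h) ?_ ?_ (hF x hx)
  · filter_upwards [eventually_gt_atTop 0] with h hh y hy
    exact le_smul_div_of_tendsto hws hy (hF y hy) hh
  · filter_upwards [eventually_gt_atTop 0] with h hh
    have hmaps : MapsTo (h • ·) {y : Fin N → ℝ | 0 ≤ y} {y | 0 ≤ y} :=
      fun y (hy : 0 ≤ y) => smul_nonneg hh.le hy
    exact ((hfc.comp (continuous_const_smul h).continuousOn hmaps).div_const h) x hx

/-- The asymptotic function f_∞ of a WSI function f is positively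
homogeneous on the nonnegative orthant; if f is continuous on the orthant, so
is f_∞. -/
theorem stmt4 {N : ℕ} (f : (Fin N → ℝ) → ℝ)
    (hnn : ∀ x : Fin N → ℝ, 0 ≤ x → 0 ≤ f x)
    (hmono : ∀ x y : Fin N → ℝ, 0 ≤ x → x ≤ y → f x ≤ f y)
    (hws : ∀ x : Fin N → ℝ, 0 ≤ x → ∀ α : ℝ, 1 ≤ α → f (α • x) ≤ α * f x)
    (F : (Fin N → ℝ) → ℝ)
    (hF : ∀ x : Fin N → ℝ, 0 ≤ x →
      Tendsto (fun h : ℝ => f (h • x) / h) atTop (nhds (F x))) :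
    (∀ x : Fin N → ℝ, 0 ≤ x → ∀ α : ℝ, 0 ≤ α → F (α • x) = α * F x) ∧
    (ContinuousOn f {x : Fin N → ℝ | 0 ≤ x} →
      ContinuousOn F {x : Fin N → ℝ | 0 ≤ x}) :=
  stmt4_general f hmono hws F hF
end

section
/- Let T : ℝ^N_+ → ℝ^N_{++} be a continuous SI mapping and ‖·‖ a monotone norm on ℝ^N. Suppose (x⋆, λ⋆) ∈ ℝ^N_{++} × ℝ_{++} satisfies T(x⋆) = λ⋆ x⋆ and ‖x⋆‖ = 1, and suppose (x′, λ′) ∈ ℝ^N_+ × ℝ_+ satisfies T(x′) ≥ λ′ x′ (coordinatewise) and ‖x′‖ = 1. Then λ⋆ ≥ λ′. -/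
/-!
Scale `x′` down to the largest multiple `c • x'` lying below `x⋆`; it touches `x⋆` in some
coordinate `i`, and monotonicity of the norm forces `c ≤ 1`. Scalability makes `T`
subhomogeneous on `[0, 1]`, so at the contact coordinate
`λ′ x⋆ᵢ = c λ′ x′ᵢ ≤ c T(x′)ᵢ ≤ T(c x′)ᵢ ≤ T(x⋆)ᵢ = λ⋆ x⋆ᵢ`.
-/

section

variable {ι : Type*}

theorem smul_map_le_map_smul_of_scalable {T : (ι → ℝ) → (ι → ℝ)}
    (hscal : ∀ x : ι → ℝ, 0 ≤ x → ∀ α : ℝ, 1 < α → ∀ i, T (α • x) i < α * T x i)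
    {x : ι → ℝ} (hx : 0 ≤ x) {c : ℝ} (hc0 : 0 < c) (hc1 : c ≤ 1) :
    c • T x ≤ T (c • x) := by
  rcases hc1.eq_or_lt with rfl | hc1
  · simp
  intro i
  have hcx : 0 ≤ c • x := smul_nonneg hc0.le hx
  have h := hscal (c • x) hcx c⁻¹ ((one_lt_inv₀ hc0).mpr hc1) i
  rw [inv_smul_smul₀ hc0.ne'] at h
  calc c * T x i ≤ c * (c⁻¹ * T (c • x) i) := by gcongr
    _ = T (c • x) i := by field_simp

theorem exists_smul_le_and_eq_of_pos [Fintype ι] {x y : ι → ℝ} (hx : 0 ≤ x) (hx0 : x ≠ 0)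
    (hy : ∀ i, 0 < y i) : ∃ c > 0, c • x ≤ y ∧ ∃ i, c * x i = y i := by
  obtain ⟨j, hj⟩ := Function.ne_iff.mp hx0
  have hsupp : (Finset.univ.filter fun i => 0 < x i).Nonempty :=
    ⟨j, by simpa using (hx j).lt_of_ne' hj⟩
  obtain ⟨i, hi, hmin⟩ := Finset.exists_min_image _ (fun i => y i / x i) hsupp
  have hxi : 0 < x i := (Finset.mem_filter.mp hi).2
  refine ⟨y i / x i, div_pos (hy i) hxi, fun k => ?_, i, div_mul_cancel₀ _ hxi.ne'⟩
  rcases (hx k).eq_or_lt with hxk | hxk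
  · simpa [← hxk] using (hy k).le
  · calc y i / x i * x k ≤ y k / x k * x k :=
          mul_le_mul_of_nonneg_right (hmin k (by simpa using hxk)) hxk.le
      _ = y k := div_mul_cancel₀ _ hxk.ne'

end

theorem stmt9_general {N : ℕ} (T : (Fin N → ℝ) → (Fin N → ℝ))
    (hmono : ∀ x y : Fin N → ℝ, 0 ≤ x → x ≤ y → T x ≤ T y)
    (hscal : ∀ x : Fin N → ℝ, 0 ≤ x → ∀ α : ℝ, 1 < α → ∀ i, T (α • x) i < α * T x i)
    (ν : (Fin N → ℝ) → ℝ)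
    (hνs : ∀ (a : ℝ) (x : Fin N → ℝ), ν (a • x) = |a| * ν x)
    (hνm : ∀ x y : Fin N → ℝ, 0 ≤ x → x ≤ y → ν x ≤ ν y)
    (xs : Fin N → ℝ) (lams : ℝ) (hxs : ∀ i, 0 < xs i)
    (heig : T xs = lams • xs) (hns : ν xs = 1)
    (x' : Fin N → ℝ) (lam' : ℝ) (hx' : 0 ≤ x')
    (hineq : lam' • x' ≤ T x') (hn' : ν x' = 1) :
    lam' ≤ lams := by
  have hx'0 : x' ≠ 0 := by
    rintro rfl
    have hν0 : ν 0 = 0 := by simpa using hνs 0 0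
    exact one_ne_zero (hn'.symm.trans hν0)
  obtain ⟨c, hc0, hcx, i, hci⟩ := exists_smul_le_and_eq_of_pos hx' hx'0 hxs
  have hcx' : 0 ≤ c • x' := smul_nonneg hc0.le hx'
  have hc1 : c ≤ 1 := by
    simpa [hνs, hn', hns, abs_of_pos hc0] using hνm _ _ hcx' hcx
  have hcontact : lam' * xs i ≤ lams * xs i :=
    calc lam' * xs i = c * (lam' * x' i) := by rw [← hci]; ring
      _ ≤ c * T x' i := by gcongr; exact hineq i
      _ ≤ T (c • x') i := smul_map_le_map_smul_of_scalable hscal hx' hc0 hc1 i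
      _ ≤ T xs i := hmono _ _ hcx' hcx i
      _ = lams * xs i := by rw [heig, Pi.smul_apply, smul_eq_mul]
  exact le_of_mul_le_mul_right hcontact (hxs i)

/-- For a continuous SI mapping T and a monotone norm ν, if
(x⋆, λ⋆) is a positive normalized eigenpair of T and (x′, λ′) is a normalized
pair with T(x′) ≥ λ′ x′, then λ⋆ ≥ λ′. -/
theorem stmt9 {N : ℕ} (T : (Fin N → ℝ) → (Fin N → ℝ))
    (hpos : ∀ x : Fin N → ℝ, 0 ≤ x → ∀ i, 0 < T x i)
    (hmono : ∀ x y : Fin N → ℝ, 0 ≤ x → x ≤ y → T x ≤ T y)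
    (hscal : ∀ x : Fin N → ℝ, 0 ≤ x → ∀ α : ℝ, 1 < α → ∀ i, T (α • x) i < α * T x i)
    (hcont : ContinuousOn T {x : Fin N → ℝ | 0 ≤ x})
    (ν : (Fin N → ℝ) → ℝ)
    (hν0 : ∀ x, ν x = 0 ↔ x = 0)
    (hνs : ∀ (a : ℝ) (x : Fin N → ℝ), ν (a • x) = |a| * ν x)
    (hνt : ∀ x y : Fin N → ℝ, ν (x + y) ≤ ν x + ν y)
    (hνm : ∀ x y : Fin N → ℝ, 0 ≤ x → x ≤ y → ν x ≤ ν y)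
    (xs : Fin N → ℝ) (lams : ℝ) (hxs : ∀ i, 0 < xs i) (hlams : 0 < lams)
    (heig : T xs = lams • xs) (hns : ν xs = 1)
    (x' : Fin N → ℝ) (lam' : ℝ) (hx' : 0 ≤ x') (hlam' : 0 ≤ lam')
    (hineq : lam' • x' ≤ T x') (hn' : ν x' = 1) :
    lam' ≤ lams :=
  stmt9_general T hmono hscal ν hνs hνm xs lams hxs heig hns x' lam' hx' hineq hn'
end

section
/- Let T : ℝ^N_+ → ℝ^N_{++} be a continuous SI mapping, and let ‖·‖_a and ‖·‖_b be monotone norms on ℝ^N. Let p̄₁ > p̄₂ > 0, and suppose (p₁, u₁), (p₂, u₂) ∈ ℝ^N_{++} × ℝ_{++} satisfy pᵢ = uᵢ T(pᵢ) and ‖pᵢ‖_a = p̄ᵢ for i = 1, 2. Then the ‖·‖_b-efficiencies satisfy u₁/‖p₁‖_b ≤ u₂/‖p₂‖_b; equivalently, ‖T(p₁)‖_b ≥ ‖T(p₂)‖_b (note uᵢ/‖pᵢ‖_b = 1/‖T(pᵢ)‖_b). -/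
/-!
For an SI mapping the utility of a solution of `p = u T(p)` is strictly monotone in `p` in the
following sense: if `q ≰ p`, take the largest ratio `β = q j / p j > 1`; then monotonicity and
scalability give `q j = v T(q) j ≤ v T(β p) j < v β T(p) j = (v / u) q j`, so `u < v`.
Since `‖p₂‖_a < ‖p₁‖_a` rules out `p₁ ≤ p₂`, this gives `u₂ < u₁` and then `p₂ ≤ p₁`, hence
`T(p₂) ≤ T(p₁)`, and the efficiency `u / ‖p‖_b = 1 / ‖T(p)‖_b` can only decrease.
-/

open Finset

theorem utility_lt_of_not_le {ι : Type*} [Fintype ι] {T : (ι → ℝ) → ι → ℝ}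
    (hmono : ∀ x y : ι → ℝ, 0 ≤ x → x ≤ y → T x ≤ T y)
    (hscal : ∀ x : ι → ℝ, 0 ≤ x → ∀ α : ℝ, 1 < α → ∀ i, T (α • x) i < α * T x i)
    {p q : ι → ℝ} {u v : ℝ} (hp : ∀ i, 0 < p i) (hq : 0 ≤ q) (hu : 0 < u) (hv : 0 < v)
    (hfp : p = u • T p) (hfq : q = v • T q) (hqp : ¬ q ≤ p) : u < v := by
  obtain ⟨i₀, hi₀⟩ : ∃ i, p i < q i := by simpa [Pi.le_def] using hqp
  obtain ⟨j, -, hj⟩ := exists_max_image univ (fun i => q i / p i) ⟨i₀, mem_univ i₀⟩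
  set β := q j / p j
  have hβ : 1 < β := ((one_lt_div (hp i₀)).2 hi₀).trans_le (hj i₀ (mem_univ i₀))
  have hqβp : q ≤ β • p := fun i => by
    simpa [mul_comm] using (div_le_iff₀ (hp i)).1 (hj i (mem_univ i))
  have hqj : q j = β * p j := (div_mul_cancel₀ _ (hp j).ne').symm
  have hpj : p j = u * T p j := congrFun hfp j
  have hlt : q j < v / u * q j :=
    calc q j = v * T q j := congrFun hfq j
      _ ≤ v * T (β • p) j := by gcongr; exact hmono _ _ hq hqβp j
      _ < v * (β * T p j) := by gcongr; exact hscal p (fun i => (hp i).le) β hβ j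
      _ = v / u * q j := by rw [hqj, hpj]; field_simp
  have hqj_pos : 0 < q j := hqj ▸ mul_pos (zero_lt_one.trans hβ) (hp j)
  exact (one_lt_div hu).1 ((lt_mul_iff_one_lt_left hqj_pos).1 hlt)

theorem le_of_utility_le {ι : Type*} [Fintype ι] {T : (ι → ℝ) → ι → ℝ}
    (hmono : ∀ x y : ι → ℝ, 0 ≤ x → x ≤ y → T x ≤ T y)
    (hscal : ∀ x : ι → ℝ, 0 ≤ x → ∀ α : ℝ, 1 < α → ∀ i, T (α • x) i < α * T x i)
    {p q : ι → ℝ} {u v : ℝ} (hp : ∀ i, 0 < p i) (hq : 0 ≤ q) (hu : 0 < u) (hv : 0 < v)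
    (hfp : p = u • T p) (hfq : q = v • T q) (hvu : v ≤ u) : q ≤ p :=
  by_contra fun hqp => (utility_lt_of_not_le hmono hscal hp hq hu hv hfp hfq hqp).not_ge hvu

theorem pos_of_eq_smul {ι : Type*} {p x : ι → ℝ} {u : ℝ} (hp : ∀ i, 0 < p i) (hu : 0 < u)
    (h : p = u • x) (i : ι) : 0 < x i :=
  pos_of_mul_pos_right (by simpa [h] using hp i) hu.le

theorem pos_of_monotone_of_eq_zero_iff {E : Type*} [Preorder E] [Zero E] {ν : E → ℝ}
    (hν0 : ∀ x, ν x = 0 ↔ x = 0) (hνm : ∀ x y : E, 0 ≤ x → x ≤ y → ν x ≤ ν y)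
    {x : E} (hx : 0 ≤ x) (hx0 : x ≠ 0) : 0 < ν x :=
  lt_of_le_of_ne ((hν0 0).2 rfl ▸ hνm 0 x le_rfl hx) fun h => hx0 ((hν0 x).1 h.symm)

theorem div_eq_inv_of_eq_smul {E : Type*} [AddCommGroup E] [Module ℝ E] {ν : E → ℝ}
    (hνs : ∀ (a : ℝ) (x : E), ν (a • x) = |a| * ν x) {p x : E} {u : ℝ} (hu : 0 < u)
    (h : p = u • x) : u / ν p = (ν x)⁻¹ := by
  rw [h, hνs, abs_of_pos hu, div_mul_cancel_left₀ hu.ne']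

theorem stmt10_general {N : ℕ} (T : (Fin N → ℝ) → (Fin N → ℝ))
    (hmono : ∀ x y : Fin N → ℝ, 0 ≤ x → x ≤ y → T x ≤ T y)
    (hscal : ∀ x : Fin N → ℝ, 0 ≤ x → ∀ α : ℝ, 1 < α → ∀ i, T (α • x) i < α * T x i)
    (νa νb : (Fin N → ℝ) → ℝ)
    (hνa0 : ∀ x, νa x = 0 ↔ x = 0)
    (hνam : ∀ x y : Fin N → ℝ, 0 ≤ x → x ≤ y → νa x ≤ νa y)
    (hνb0 : ∀ x, νb x = 0 ↔ x = 0)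
    (hνbs : ∀ (a : ℝ) (x : Fin N → ℝ), νb (a • x) = |a| * νb x)
    (hνbm : ∀ x y : Fin N → ℝ, 0 ≤ x → x ≤ y → νb x ≤ νb y)
    (pbar₁ pbar₂ : ℝ) (h21 : pbar₂ < pbar₁) (h2 : 0 < pbar₂)
    (p₁ p₂ : Fin N → ℝ) (u₁ u₂ : ℝ)
    (hp₁ : ∀ i, 0 < p₁ i) (hp₂ : ∀ i, 0 < p₂ i) (hu₁ : 0 < u₁) (hu₂ : 0 < u₂)
    (hfix₁ : p₁ = u₁ • T p₁) (hfix₂ : p₂ = u₂ • T p₂)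
    (hna₁ : νa p₁ = pbar₁) (hna₂ : νa p₂ = pbar₂) :
    u₁ / νb p₁ ≤ u₂ / νb p₂ ∧ νb (T p₂) ≤ νb (T p₁) := by
  have hp₁0 : 0 ≤ p₁ := fun i => (hp₁ i).le
  have hp₂0 : 0 ≤ p₂ := fun i => (hp₂ i).le
  have hp₁₂ : ¬ p₁ ≤ p₂ := fun h => (hna₁ ▸ hna₂ ▸ h21).not_ge (hνam _ _ hp₁0 h)
  have hu : u₂ < u₁ := utility_lt_of_not_le hmono hscal hp₂ hp₁0 hu₂ hu₁ hfix₂ hfix₁ hp₁₂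
  have hp : p₂ ≤ p₁ := le_of_utility_le hmono hscal hp₁ hp₂0 hu₁ hu₂ hfix₁ hfix₂ hu.le
  have hTp₂0 : 0 ≤ T p₂ := fun i => (pos_of_eq_smul hp₂ hu₂ hfix₂ i).le
  have hTb : νb (T p₂) ≤ νb (T p₁) := hνbm _ _ hTp₂0 (hmono _ _ hp₂0 hp)
  have hp₂ne : p₂ ≠ 0 := fun h => h2.ne' (hna₂ ▸ (hνa0 p₂).2 h)
  have hTp₂ne : T p₂ ≠ 0 := fun h => hp₂ne (by rw [hfix₂, h, smul_zero])
  have hTb_pos : 0 < νb (T p₂) := pos_of_monotone_of_eq_zero_iff hνb0 hνbm hTp₂0 hTp₂ne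
  refine ⟨?_, hTb⟩
  rw [div_eq_inv_of_eq_smul hνbs hu₁ hfix₁, div_eq_inv_of_eq_smul hνbs hu₂ hfix₂]
  exact inv_anti₀ hTb_pos hTb

/-- The ‖·‖_b-efficiency of solutions to the canonical max-min
utility problem is nonincreasing in the budget. -/
theorem stmt10 {N : ℕ} (T : (Fin N → ℝ) → (Fin N → ℝ))
    (hpos : ∀ x : Fin N → ℝ, 0 ≤ x → ∀ i, 0 < T x i)
    (hmono : ∀ x y : Fin N → ℝ, 0 ≤ x → x ≤ y → T x ≤ T y)
    (hscal : ∀ x : Fin N → ℝ, 0 ≤ x → ∀ α : ℝ, 1 < α → ∀ i, T (α • x) i < α * T x i)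
    (hcont : ContinuousOn T {x : Fin N → ℝ | 0 ≤ x})
    (νa νb : (Fin N → ℝ) → ℝ)
    (hνa0 : ∀ x, νa x = 0 ↔ x = 0)
    (hνas : ∀ (a : ℝ) (x : Fin N → ℝ), νa (a • x) = |a| * νa x)
    (hνat : ∀ x y : Fin N → ℝ, νa (x + y) ≤ νa x + νa y)
    (hνam : ∀ x y : Fin N → ℝ, 0 ≤ x → x ≤ y → νa x ≤ νa y)
    (hνb0 : ∀ x, νb x = 0 ↔ x = 0)
    (hνbs : ∀ (a : ℝ) (x : Fin N → ℝ), νb (a • x) = |a| * νb x)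
    (hνbt : ∀ x y : Fin N → ℝ, νb (x + y) ≤ νb x + νb y)
    (hνbm : ∀ x y : Fin N → ℝ, 0 ≤ x → x ≤ y → νb x ≤ νb y)
    (pbar₁ pbar₂ : ℝ) (h21 : pbar₂ < pbar₁) (h2 : 0 < pbar₂)
    (p₁ p₂ : Fin N → ℝ) (u₁ u₂ : ℝ)
    (hp₁ : ∀ i, 0 < p₁ i) (hp₂ : ∀ i, 0 < p₂ i) (hu₁ : 0 < u₁) (hu₂ : 0 < u₂)
    (hfix₁ : p₁ = u₁ • T p₁) (hfix₂ : p₂ = u₂ • T p₂)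
    (hna₁ : νa p₁ = pbar₁) (hna₂ : νa p₂ = pbar₂) :
    u₁ / νb p₁ ≤ u₂ / νb p₂ ∧ νb (T p₂) ≤ νb (T p₁) :=
  stmt10_general T hmono hscal νa νb hνa0 hνam hνb0 hνbs hνbm pbar₁ pbar₂ h21 h2 p₁ p₂ u₁ u₂ hp₁ hp₂
    hu₁ hu₂ hfix₁ hfix₂ hna₁ hna₂
end

section
/- Let T : ℝ^N_+ → ℝ^N_{++} be a continuous SI mapping, ‖·‖_a a monotone norm on ℝ^N, and T_∞ its asymptotic mapping. Let (p̄_n) ⊂ ℝ_{++} be a strictly increasing sequence with p̄_n → ∞, and for each n let (p_n, λ_n) ∈ ℝ^N_{++} × ℝ_{++} satisfy T(p_n) = λ_n p_n and ‖p_n‖_a = p̄_n. Assume λ_n → λ_∞. Set x_n := p_n/p̄_n, so ‖x_n‖_a = 1. Then the sequence (x_n) is bounded, and every accumulation point x_∞ ∈ ℝ^N_+ of (x_n) satisfies T_∞(x_∞) = λ_∞ x_∞ and ‖x_∞‖_a = 1; i.e., (x_∞, λ_∞) solves the conditional eigenvalue problem for T_∞. Moreover, if (x′, λ′) is the unique pair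 in ℝ^N_+ × ℝ_+ with T_∞(x′) = λ′x′ and ‖x′‖_a = 1, then x_n → x′ and λ_∞ = λ′. -/
/-!
Scalability makes `h ↦ T (h • v) i / h` antitone on `h > 0`, so `T_∞ v i` is its infimum, and
`T_∞` is positively homogeneous. Along a subsequence with `x_k → x_∞`, the ratio
`T (p̄_k • x_k) i / p̄_k = λ_k x_k i` is squeezed: from below by
`T_∞ (t • x_∞) i = t T_∞ x_∞ i` for `t < 1` close to `1` (monotonicity, as eventually
`t • x_∞ ≤ x_k`), from above by `T (h₀ • (x_∞ + ε)) i / h₀` for a fixed `h₀` (monotonicity,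
antitonicity, then continuity of `T` to let `ε → 0`). Hence `T_∞ x_∞ = λ_∞ x_∞`.
Boundedness holds because `‖·‖_a` dominates a multiple of the sup norm, as any norm in finite
dimension; under uniqueness every cluster point of the bounded sequence `(x_n)` is `x'`.
-/

open Filter Topology Set Metric

namespace Seminorm

variable {E : Type*} [NormedAddCommGroup E] [NormedSpace ℝ E] [FiniteDimensional ℝ E]

theorem continuous_of_finiteDimensional (p : Seminorm ℝ E) : Continuous p :=
  continuousOn_univ.1 (p.convexOn.continuousOn isOpen_univ)

theorem exists_norm_le_mul (p : Seminorm ℝ E) (hp : ∀ x, p x = 0 → x = 0) :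
    ∃ C, ∀ x, ‖x‖ ≤ C * p x := by
  have hinv : ContinuousOn (fun x => (p x)⁻¹) (sphere (0 : E) 1) :=
    p.continuous_of_finiteDimensional.continuousOn.inv₀ fun x hx h =>
      by simp [hp x h] at hx
  obtain ⟨C, hC⟩ := (isCompact_sphere (0 : E) 1).exists_bound_of_continuousOn hinv
  refine ⟨C, fun x => ?_⟩
  rcases eq_or_ne x 0 with rfl | hx
  · simp
  have hpx : 0 < p x := (apply_nonneg p x).lt_of_ne fun h => hx (hp x h.symm)
  have hu := hC (‖x‖⁻¹ • x) (by simpa using norm_smul_inv_norm (𝕜 := ℝ) hx)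
  simp only [map_smul_eq_mul, norm_inv, mul_inv, inv_inv, norm_mul, Real.norm_eq_abs,
    abs_norm, abs_of_pos hpx] at hu
  rwa [← div_le_iff₀ hpx, div_eq_mul_inv]

end Seminorm

section AsymptoticMap

variable {ι α : Type*} {f g : (ι → ℝ) → ℝ} {v : ι → ℝ} {L : ℝ}

theorem antitoneOn_div_smul (hsub : ∀ w, 0 ≤ w → ∀ t : ℝ, 1 < t → f (t • w) ≤ t * f w)
    (hv : 0 ≤ v) : AntitoneOn (fun h : ℝ => f (h • v) / h) (Ioi 0) := by
  intro h (hh : 0 < h) h' (hh' : 0 < h') hle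
  rcases hle.eq_or_lt with rfl | hlt
  · rfl
  have key := hsub (h • v) (smul_nonneg hh.le hv) (h' / h) ((one_lt_div hh).2 hlt)
  rw [smul_smul, div_mul_cancel₀ _ hh.ne'] at key
  calc f (h' • v) / h' ≤ h' / h * f (h • v) / h' := by gcongr
    _ = f (h • v) / h := by field_simp

theorem le_div_smul_of_tendsto (hsub : ∀ w, 0 ≤ w → ∀ t : ℝ, 1 < t → f (t • w) ≤ t * f w)
    (hv : 0 ≤ v) (hL : Tendsto (fun h : ℝ => f (h • v) / h) atTop (𝓝 L)) {h : ℝ} (hh : 0 < h) :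
    L ≤ f (h • v) / h :=
  le_of_tendsto hL <| (eventually_ge_atTop h).mono fun _ hle =>
    antitoneOn_div_smul hsub hv hh (hh.trans_le hle) hle

theorem tendsto_div_smul_smul (hL : Tendsto (fun h : ℝ => f (h • v) / h) atTop (𝓝 L)) {c : ℝ}
    (hc : 0 < c) : Tendsto (fun h : ℝ => f (h • c • v) / h) atTop (𝓝 (c * L)) := by
  refine ((hL.comp (tendsto_id.atTop_mul_const hc)).const_mul c).congr' ?_
  filter_upwards [eventually_gt_atTop 0] with h hh
  simp only [Function.comp_apply, id, smul_smul]
  field_simp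

theorem eventually_smul_le_of_tendsto_s11 [Finite ι] {l : Filter α} {y : α → ι → ℝ} {t : ℝ}
    (ht : t < 1) (hv : 0 ≤ v) (hy : Tendsto y l (𝓝 v)) (hy0 : ∀ᶠ a in l, 0 ≤ y a) :
    ∀ᶠ a in l, t • v ≤ y a := by
  refine eventually_all.2 fun j => ?_
  rcases (hv j).eq_or_lt with hj | hj
  · filter_upwards [hy0] with a ha
    simpa [← hj] using ha j
  · have : t * v j < v j := mul_lt_of_lt_one_left hj ht
    filter_upwards [(tendsto_pi_nhds.1 hy j).eventually (eventually_gt_nhds this)] with a ha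
    exact ha.le

theorem eventually_le_add_const_of_tendsto [Finite ι] {l : Filter α} {y : α → ι → ℝ} {ε : ℝ}
    (hε : 0 < ε) (hy : Tendsto y l (𝓝 v)) : ∀ᶠ a in l, y a ≤ v + fun _ => ε :=
  eventually_all.2 fun j =>
    ((tendsto_pi_nhds.1 hy j).eventually (eventually_lt_nhds (lt_add_of_pos_right (v j) hε))).mono
      fun _ ha => ha.le

variable [Finite ι] {l : Filter α} {h : α → ℝ} {y : α → ι → ℝ} {c : ℝ}

theorem eventually_lt_div_smul (hmono : MonotoneOn f (Ici 0))
    (hsub : ∀ w, 0 ≤ w → ∀ t : ℝ, 1 < t → f (t • w) ≤ t * f w)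
    (hg : ∀ w, 0 ≤ w → Tendsto (fun h : ℝ => f (h • w) / h) atTop (𝓝 (g w)))
    (hh : Tendsto h l atTop) (hy : Tendsto y l (𝓝 v)) (hy0 : ∀ᶠ a in l, 0 ≤ y a) (hv : 0 ≤ v)
    (hc : c < g v) : ∀ᶠ a in l, c < f (h a • y a) / h a := by
  have hlim : Tendsto (fun t : ℝ => t * g v) (𝓝[<] 1) (𝓝 (g v)) :=
    ((continuous_mul_const (g v)).tendsto' 1 _ (one_mul _)).mono_left nhdsWithin_le_nhds
  obtain ⟨t, hct, ht0, ht1⟩ : ∃ t, c < t * g v ∧ 0 < t ∧ t < 1 :=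
    ((hlim.eventually (eventually_gt_nhds hc)).and (Ioo_mem_nhdsLT zero_lt_one)).exists
  have htv : 0 ≤ t • v := smul_nonneg ht0.le hv
  have hgt : g (t • v) = t * g v :=
    tendsto_nhds_unique (hg _ htv) (tendsto_div_smul_smul (hg v hv) ht0)
  filter_upwards [eventually_smul_le_of_tendsto_s11 ht1 hv hy hy0, hy0, hh.eventually_gt_atTop 0]
    with a hle hya ha
  calc c < g (t • v) := hgt ▸ hct
    _ ≤ f (h a • t • v) / h a := le_div_smul_of_tendsto hsub htv (hg _ htv) ha
    _ ≤ f (h a • y a) / h a := by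
      gcongr
      exact hmono (smul_nonneg ha.le htv) (smul_nonneg ha.le hya)
        (smul_le_smul_of_nonneg_left hle ha.le)

theorem eventually_div_smul_lt (hmono : MonotoneOn f (Ici 0))
    (hsub : ∀ w, 0 ≤ w → ∀ t : ℝ, 1 < t → f (t • w) ≤ t * f w) (hcont : ContinuousOn f (Ici 0))
    (hL : Tendsto (fun h : ℝ => f (h • v) / h) atTop (𝓝 L))
    (hh : Tendsto h l atTop) (hy : Tendsto y l (𝓝 v)) (hy0 : ∀ᶠ a in l, 0 ≤ y a) (hv : 0 ≤ v)
    (hc : L < c) : ∀ᶠ a in l, f (h a • y a) / h a < c := by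
  obtain ⟨h₀, hh₀c, hh₀⟩ : ∃ h₀, f (h₀ • v) / h₀ < c ∧ 0 < h₀ :=
    ((hL.eventually (eventually_lt_nhds hc)).and (eventually_gt_atTop 0)).exists
  have hpath : ContinuousOn (fun ε : ℝ => f (h₀ • (v + fun _ => ε)) / h₀) (Ici 0) := by
    refine (hcont.comp (by fun_prop) fun ε (hε : 0 ≤ ε) => ?_).div_const h₀
    exact smul_nonneg hh₀.le (add_nonneg hv fun _ => hε)
  obtain ⟨ε, hεc, hε⟩ : ∃ ε, f (h₀ • (v + fun _ => ε)) / h₀ < c ∧ 0 < ε := by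
    have := (hpath 0 self_mem_Ici).mono_left (nhdsWithin_mono _ Ioi_subset_Ici_self)
    beta_reduce at this
    rw [show (v + fun _ => (0 : ℝ)) = v from add_zero v] at this
    exact ((this.eventually (eventually_lt_nhds hh₀c)).and self_mem_nhdsWithin).exists
  have hw : 0 ≤ v + fun _ => ε := add_nonneg hv fun _ => hε.le
  filter_upwards [eventually_le_add_const_of_tendsto hε hy, hy0, hh.eventually_ge_atTop h₀]
    with a hle hya ha
  have ha0 : 0 < h a := hh₀.trans_le ha
  calc f (h a • y a) / h a ≤ f (h a • (v + fun _ => ε)) / h a := by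
        gcongr
        exact hmono (smul_nonneg ha0.le hya) (smul_nonneg ha0.le hw)
          (smul_le_smul_of_nonneg_left hle ha0.le)
    _ ≤ f (h₀ • (v + fun _ => ε)) / h₀ := antitoneOn_div_smul hsub hw hh₀ ha0 ha
    _ < c := hεc

theorem tendsto_div_smul_of_tendsto (hmono : MonotoneOn f (Ici 0))
    (hsub : ∀ w, 0 ≤ w → ∀ t : ℝ, 1 < t → f (t • w) ≤ t * f w) (hcont : ContinuousOn f (Ici 0))
    (hg : ∀ w, 0 ≤ w → Tendsto (fun h : ℝ => f (h • w) / h) atTop (𝓝 (g w)))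
    (hh : Tendsto h l atTop) (hy : Tendsto y l (𝓝 v)) (hy0 : ∀ᶠ a in l, 0 ≤ y a) (hv : 0 ≤ v) :
    Tendsto (fun a => f (h a • y a) / h a) l (𝓝 (g v)) :=
  tendsto_order.2 ⟨fun _ hc => eventually_lt_div_smul hmono hsub hg hh hy hy0 hv hc,
    fun _ hc => eventually_div_smul_lt hmono hsub hcont (hg v hv) hh hy hy0 hv hc⟩

theorem eq_smul_of_tendsto_rescaled_eigen {T Tinf : (ι → ℝ) → ι → ℝ} [l.NeBot] {lam : α → ℝ}
    {μ : ℝ} (hmono : MonotoneOn T (Ici 0))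
    (hsub : ∀ w, 0 ≤ w → ∀ t : ℝ, 1 < t → T (t • w) ≤ t • T w) (hcont : ContinuousOn T (Ici 0))
    (hTinf : ∀ w, 0 ≤ w → ∀ i, Tendsto (fun h : ℝ => T (h • w) i / h) atTop (𝓝 (Tinf w i)))
    (hh : Tendsto h l atTop) (hy : Tendsto y l (𝓝 v)) (hy0 : ∀ᶠ a in l, 0 ≤ y a) (hv : 0 ≤ v)
    (hlam : Tendsto lam l (𝓝 μ)) (heig : ∀ a, T (h a • y a) = lam a • h a • y a) :
    Tinf v = μ • v := by
  funext i
  refine tendsto_nhds_unique (tendsto_div_smul_of_tendsto (fun a ha b hb hab => hmono ha hb hab i)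
    (fun w hw t ht => hsub w hw t ht i) ((continuous_apply i).comp_continuousOn hcont)
    (fun w hw => hTinf w hw i) hh hy hy0 hv) ?_
  refine (hlam.mul ((continuous_apply i).tendsto v |>.comp hy)).congr' ?_
  filter_upwards [hh.eventually_ne_atTop 0] with a ha
  simp only [heig, Pi.smul_apply, smul_eq_mul, Function.comp_apply]
  field_simp

end AsymptoticMap

theorem stmt11_general {N : ℕ} (T : (Fin N → ℝ) → (Fin N → ℝ))
    (hmono : ∀ x y : Fin N → ℝ, 0 ≤ x → x ≤ y → T x ≤ T y)
    (hscal : ∀ x : Fin N → ℝ, 0 ≤ x → ∀ α : ℝ, 1 < α → ∀ i, T (α • x) i < α * T x i)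
    (hcont : ContinuousOn T {x : Fin N → ℝ | 0 ≤ x})
    (νa : (Fin N → ℝ) → ℝ)
    (hνa0 : ∀ x, νa x = 0 ↔ x = 0)
    (hνas : ∀ (a : ℝ) (x : Fin N → ℝ), νa (a • x) = |a| * νa x)
    (hνat : ∀ x y : Fin N → ℝ, νa (x + y) ≤ νa x + νa y)
    (Tinf : (Fin N → ℝ) → (Fin N → ℝ))
    (hTinf : ∀ x : Fin N → ℝ, 0 ≤ x → ∀ i,
      Tendsto (fun h : ℝ => T (h • x) i / h) atTop (nhds (Tinf x i)))
    (pbar : ℕ → ℝ) (hpbar_pos : ∀ n, 0 < pbar n)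
    (hpbar_lim : Tendsto pbar atTop atTop)
    (p : ℕ → Fin N → ℝ) (lam : ℕ → ℝ)
    (hp_pos : ∀ n i, 0 < p n i) (hlam_pos : ∀ n, 0 < lam n)
    (heig : ∀ n, T (p n) = lam n • p n) (hnorm : ∀ n, νa (p n) = pbar n)
    (laminf : ℝ) (hlam_lim : Tendsto lam atTop (nhds laminf))
    (x : ℕ → Fin N → ℝ) (hx : ∀ n, x n = (pbar n)⁻¹ • p n)
    (x' : Fin N → ℝ) (lam' : ℝ) :
    (∃ C : ℝ, ∀ n, ‖x n‖ ≤ C) ∧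
    (∀ xinf : Fin N → ℝ, 0 ≤ xinf → MapClusterPt xinf atTop x →
      Tinf xinf = laminf • xinf ∧ νa xinf = 1) ∧
    ((0 ≤ x' ∧ 0 ≤ lam' ∧ Tinf x' = lam' • x' ∧ νa x' = 1) →
      (∀ (y : Fin N → ℝ) (μ : ℝ),
        0 ≤ y → 0 ≤ μ → Tinf y = μ • y → νa y = 1 → y = x' ∧ μ = lam') →
      Tendsto x atTop (nhds x') ∧ laminf = lam') := by
  let ν : Seminorm ℝ (Fin N → ℝ) := .of νa hνat fun a v => by rw [hνas, Real.norm_eq_abs]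
  have hν : ⇑ν = νa := rfl
  have hx0 (n : ℕ) : 0 ≤ x n :=
    hx n ▸ smul_nonneg (inv_pos.2 (hpbar_pos n)).le fun i => (hp_pos n i).le
  have hxν (n : ℕ) : νa (x n) = 1 := by
    rw [hx, hνas, hnorm, abs_of_pos (inv_pos.2 (hpbar_pos n)), inv_mul_cancel₀ (hpbar_pos n).ne']
  have hpx (n : ℕ) : pbar n • x n = p n := by rw [hx, smul_inv_smul₀ (hpbar_pos n).ne']
  obtain ⟨C, hC⟩ := ν.exists_norm_le_mul fun v => (hνa0 v).1
  have hbdd (n : ℕ) : ‖x n‖ ≤ C := by simpa [hν, hxν] using hC (x n)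
  have hcluster (xinf : Fin N → ℝ) (hxinf : 0 ≤ xinf) (hcl : MapClusterPt xinf atTop x) :
      Tinf xinf = laminf • xinf ∧ νa xinf = 1 := by
    obtain ⟨ψ, hψ, hlim⟩ := hcl.tendsto_subseq
    refine ⟨eq_smul_of_tendsto_rescaled_eigen (fun a ha b _ hab => hmono a b ha hab)
      (fun w hw t ht i => (hscal w hw t ht i).le) hcont hTinf (hpbar_lim.comp hψ.tendsto_atTop)
      hlim (.of_forall fun k => hx0 (ψ k)) hxinf (hlam_lim.comp hψ.tendsto_atTop)
      fun k => by simp only [Function.comp_apply, hpx, heig], ?_⟩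
    exact tendsto_nhds_unique (ν.continuous_of_finiteDimensional.tendsto xinf |>.comp hlim)
      (by simp [hν, Function.comp_def, hxν])
  refine ⟨⟨C, hbdd⟩, hcluster, fun _ huniq => ?_⟩
  have hlaminf : 0 ≤ laminf := ge_of_tendsto' hlam_lim fun n => (hlam_pos n).le
  set K : Set (Fin N → ℝ) := closedBall 0 C ∩ Ici 0
  have hK : IsCompact K := (isCompact_closedBall 0 C).inter_right isClosed_Ici
  have hxK : ∀ᶠ n in atTop, x n ∈ K :=
    .of_forall fun n => ⟨mem_closedBall_zero_iff.2 (hbdd n), hx0 n⟩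
  have hsolution (a) (ha : a ∈ K) (hcl : MapClusterPt a atTop x) : a = x' ∧ laminf = lam' :=
    huniq a laminf ha.2 hlaminf (hcluster a ha.2 hcl).1 (hcluster a ha.2 hcl).2
  obtain ⟨a, ha, hcl⟩ := hK.exists_mapClusterPt (tendsto_principal.2 hxK)
  exact ⟨hK.tendsto_nhds_of_unique_mapClusterPt hxK fun b hb hclb => (hsolution b hb hclb).1,
    (hsolution a ha hcl).2⟩

/-- Normalized solutions of the conditional eigenvalue problems
for a continuous SI mapping T with budgets p̄_n → ∞ accumulate at solutions of
the conditional eigenvalue problem for the asymptotic mapping T_∞; under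
uniqueness of the latter, the whole sequence converges. -/
theorem stmt11 {N : ℕ} (T : (Fin N → ℝ) → (Fin N → ℝ))
    (hpos : ∀ x : Fin N → ℝ, 0 ≤ x → ∀ i, 0 < T x i)
    (hmono : ∀ x y : Fin N → ℝ, 0 ≤ x → x ≤ y → T x ≤ T y)
    (hscal : ∀ x : Fin N → ℝ, 0 ≤ x → ∀ α : ℝ, 1 < α → ∀ i, T (α • x) i < α * T x i)
    (hcont : ContinuousOn T {x : Fin N → ℝ | 0 ≤ x})
    (νa : (Fin N → ℝ) → ℝ)
    (hνa0 : ∀ x, νa x = 0 ↔ x = 0)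
    (hνas : ∀ (a : ℝ) (x : Fin N → ℝ), νa (a • x) = |a| * νa x)
    (hνat : ∀ x y : Fin N → ℝ, νa (x + y) ≤ νa x + νa y)
    (hνam : ∀ x y : Fin N → ℝ, 0 ≤ x → x ≤ y → νa x ≤ νa y)
    (Tinf : (Fin N → ℝ) → (Fin N → ℝ))
    (hTinf : ∀ x : Fin N → ℝ, 0 ≤ x → ∀ i,
      Tendsto (fun h : ℝ => T (h • x) i / h) atTop (nhds (Tinf x i)))
    (pbar : ℕ → ℝ) (hpbar_pos : ∀ n, 0 < pbar n) (hpbar_mono : StrictMono pbar)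
    (hpbar_lim : Tendsto pbar atTop atTop)
    (p : ℕ → Fin N → ℝ) (lam : ℕ → ℝ)
    (hp_pos : ∀ n i, 0 < p n i) (hlam_pos : ∀ n, 0 < lam n)
    (heig : ∀ n, T (p n) = lam n • p n) (hnorm : ∀ n, νa (p n) = pbar n)
    (laminf : ℝ) (hlam_lim : Tendsto lam atTop (nhds laminf))
    (x : ℕ → Fin N → ℝ) (hx : ∀ n, x n = (pbar n)⁻¹ • p n)
    (x' : Fin N → ℝ) (lam' : ℝ) :
    (∃ C : ℝ, ∀ n, ‖x n‖ ≤ C) ∧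
    (∀ xinf : Fin N → ℝ, 0 ≤ xinf → MapClusterPt xinf atTop x →
      Tinf xinf = laminf • xinf ∧ νa xinf = 1) ∧
    ((0 ≤ x' ∧ 0 ≤ lam' ∧ Tinf x' = lam' • x' ∧ νa x' = 1) →
      (∀ (y : Fin N → ℝ) (μ : ℝ),
        0 ≤ y → 0 ≤ μ → Tinf y = μ • y → νa y = 1 → y = x' ∧ μ = lam') →
      Tendsto x atTop (nhds x') ∧ laminf = lam') :=
  stmt11_general T hmono hscal hcont νa hνa0 hνas hνat Tinf hTinf pbar hpbar_pos hpbar_lim p lam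
    hp_pos hlam_pos heig hnorm laminf hlam_lim x hx x' lam'
end

section
/- Let T : ℝ^N_+ → ℝ^N_{++} be a continuous SI mapping, ‖·‖_a a monotone norm on ℝ^N, and T_∞ its asymptotic mapping (a continuous GI mapping). Suppose for every p̄ > 0 there is a pair (p_{p̄}, λ_{p̄}) ∈ ℝ^N_{++} × ℝ_{++} with T(p_{p̄}) = λ_{p̄} p_{p̄} and ‖p_{p̄}‖_a = p̄ (such a pair exists and is unique since T is a continuous SI mapping). Then the function p̄ ↦ λ_{p̄} is nonincreasing, the limit λ_∞ := lim_{p̄→∞} λ_{p̄} exists, and λ_∞ = ρ(T_∞), the spectral radius of the asymptotic mapping. -/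
/-!
Comparing two positive eigenvectors through the largest ratio of their coordinates shows,
with monotonicity and scalability of `T`, that the eigenvalue cannot increase with the norm of
the eigenvector, and, since `T_∞ ≤ T`, that every eigenvalue of `T_∞` is below every `λ_p̄`. The
limit `λ_∞` is itself an eigenvalue of `T_∞`: the normalized eigenvectors `p_p̄ / p̄` satisfy
`T(p̄ x) / p̄ = λ_p̄ x` and have a nonzero cluster point, at which `h ↦ T(h x) / h`, being
nonincreasing, gives `T_∞` from both sides.
-/

open Filter Topology Set

variable {ι : Type*}

def ConeMonotone {β : Type*} [Preorder β] (f : (ι → ℝ) → β) : Prop :=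
  ∀ x y : ι → ℝ, 0 ≤ x → x ≤ y → f x ≤ f y

def ConeScalable (T : (ι → ℝ) → ι → ℝ) : Prop :=
  ∀ x : ι → ℝ, 0 ≤ x → ∀ α : ℝ, 1 < α → ∀ i, T (α • x) i < α * T x i

def HasAsymptoticMap (T S : (ι → ℝ) → ι → ℝ) : Prop :=
  ∀ x : ι → ℝ, 0 ≤ x → ∀ i, Tendsto (fun h : ℝ => T (h • x) i / h) atTop (𝓝 (S x i))

def coneEigenvalues (S : (ι → ℝ) → ι → ℝ) : Set ℝ :=
  {μ | 0 ≤ μ ∧ ∃ x : ι → ℝ, 0 ≤ x ∧ x ≠ 0 ∧ S x = μ • x}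

theorem le_of_forall_mem_Ioo_mul_le {a b : ℝ} (h : ∀ c ∈ Ioo (0 : ℝ) 1, c * a ≤ b) : a ≤ b := by
  have hlim : Tendsto (fun c : ℝ => c * a) (𝓝[<] 1) (𝓝 a) := by
    simpa using tendsto_nhdsWithin_of_tendsto_nhds ((continuous_mul_const a).tendsto 1)
  exact le_of_tendsto hlim (eventually_of_mem (Ioo_mem_nhdsLT zero_lt_one) h)

theorem AntitoneOn.exists_tendsto_atTop {f : ℝ → ℝ} {a : ℝ} (hf : AntitoneOn f (Ioi a))
    (hbdd : BddBelow (f '' Ioi a)) : ∃ L, Tendsto f atTop (𝓝 L) := by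
  have hmem : ∀ x, max x (a + 1) ∈ Ioi a := fun x => (lt_add_one a).trans_le (le_max_right _ _)
  have hanti : Antitone fun x => f (max x (a + 1)) := fun x y hxy =>
    hf (hmem x) (hmem y) (max_le_max hxy le_rfl)
  have hbdd' : BddBelow (range fun x => f (max x (a + 1))) :=
    hbdd.mono (range_subset_iff.2 fun x => mem_image_of_mem f (hmem x))
  refine ⟨_, (tendsto_atTop_ciInf hanti hbdd').congr' ?_⟩
  filter_upwards [eventually_ge_atTop (a + 1)] with x hx
  rw [max_eq_left hx]

theorem exists_le_smul_apply_eq [Fintype ι] {x p : ι → ℝ} (hp : ∀ i, 0 < p i) (hx0 : 0 ≤ x)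
    (hx : x ≠ 0) : ∃ s > 0, ∃ j, x ≤ s • p ∧ x j = s * p j := by
  obtain ⟨k, hk⟩ : ∃ k, 0 < x k := by
    by_contra! h
    exact hx (le_antisymm h hx0)
  obtain ⟨j, -, hj⟩ := Finset.univ.exists_max_image (fun i => x i / p i) ⟨k, Finset.mem_univ k⟩
  refine ⟨x j / p j, (div_pos hk (hp k)).trans_le (hj k (Finset.mem_univ k)), j,
    fun i => (div_le_iff₀ (hp i)).1 (hj i (Finset.mem_univ i)), ?_⟩
  rw [div_mul_cancel₀ _ (hp j).ne']

section MonotoneNorm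

variable {ν : (ι → ℝ) → ℝ}

theorem apply_zero_of_homogeneous (hνs : ∀ (a : ℝ) (x : ι → ℝ), ν (a • x) = |a| * ν x) :
    ν 0 = 0 := by
  simpa using hνs 0 0

theorem apply_nonneg_of_nonneg (hνs : ∀ (a : ℝ) (x : ι → ℝ), ν (a • x) = |a| * ν x)
    (hνm : ConeMonotone ν) {x : ι → ℝ} (hx : 0 ≤ x) : 0 ≤ ν x :=
  apply_zero_of_homogeneous hνs ▸ hνm 0 x le_rfl hx

theorem mul_apply_single_le [DecidableEq ι] (hνs : ∀ (a : ℝ) (x : ι → ℝ), ν (a • x) = |a| * ν x)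
    (hνm : ConeMonotone ν) {x : ι → ℝ} (hx : 0 ≤ x) (i : ι) :
    x i * ν (Pi.single i 1) ≤ ν x := by
  have hsingle : x i • Pi.single i (1 : ℝ) ≤ x := by
    intro k
    rcases eq_or_ne k i with rfl | hk
    · simp
    · simpa [hk] using hx k
  have := hνm _ _ (smul_nonneg (hx i) (Pi.single_nonneg.2 zero_le_one)) hsingle
  rwa [hνs, abs_of_nonneg (hx i)] at this

theorem apply_le_norm_mul_apply_one [Fintype ι]
    (hνs : ∀ (a : ℝ) (x : ι → ℝ), ν (a • x) = |a| * ν x)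
    (hνm : ConeMonotone ν) {x : ι → ℝ} (hx : 0 ≤ x) :
    ν x ≤ ‖x‖ * ν 1 := by
  have hle : x ≤ ‖x‖ • (1 : ι → ℝ) := fun i => by
    simpa using (le_abs_self (x i)).trans (norm_le_pi_norm x i)
  simpa [hνs, abs_of_nonneg (norm_nonneg x)] using hνm _ _ hx hle

theorem exists_subseq_tendsto_ne_zero [Fintype ι]
    (hν0 : ∀ x, ν x = 0 ↔ x = 0) (hνs : ∀ (a : ℝ) (x : ι → ℝ), ν (a • x) = |a| * ν x)
    (hνm : ConeMonotone ν) {x : ℕ → ι → ℝ} (hx0 : ∀ n, 0 ≤ x n)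
    (hx1 : ∀ n, ν (x n) = 1) :
    ∃ y, 0 ≤ y ∧ y ≠ 0 ∧ ∃ φ : ℕ → ℕ, StrictMono φ ∧ Tendsto (x ∘ φ) atTop (𝓝 y) := by
  classical
  have hsingle : ∀ i, 0 < ν (Pi.single i 1) := fun i =>
    (apply_nonneg_of_nonneg hνs hνm (Pi.single_nonneg.2 zero_le_one)).lt_of_ne' fun h => by
      simpa using congrFun ((hν0 _).1 h) i
  have hbox : ∀ n, x n ∈ Icc 0 fun i => (ν (Pi.single i 1))⁻¹ := fun n =>
    ⟨hx0 n, fun i => by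
      change x n i ≤ (ν (Pi.single i 1))⁻¹
      rw [← one_div, le_div_iff₀ (hsingle i)]
      exact hx1 n ▸ mul_apply_single_le hνs hνm (hx0 n) i⟩
  obtain ⟨y, hy, φ, hφ, hxy⟩ := isCompact_Icc.tendsto_subseq hbox
  refine ⟨y, hy.1, ?_, φ, hφ, hxy⟩
  rintro rfl
  have h1 : 1 ≤ ‖(0 : ι → ℝ)‖ * ν 1 :=
    ge_of_tendsto' (hxy.norm.mul_const _) fun n =>
      hx1 (φ n) ▸ apply_le_norm_mul_apply_one hνs hνm (hx0 (φ n))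
  norm_num at h1

end MonotoneNorm

section AsymptoticMap

variable {T S : (ι → ℝ) → ι → ℝ} {x y : ι → ℝ}

theorem ConeScalable.apply_smul_div_le (hT : ConeScalable T) (hx : 0 ≤ x) {h h' : ℝ}
    (hh : 0 < h) (hhh' : h ≤ h') (i : ι) : T (h' • x) i / h' ≤ T (h • x) i / h := by
  rcases hhh'.eq_or_lt with rfl | hlt
  · rfl
  have key := hT (h • x) (smul_nonneg hh.le hx) (h' / h) ((one_lt_div hh).2 hlt) i
  rw [smul_smul, div_mul_cancel₀ _ hh.ne'] at key
  rw [div_le_div_iff₀ (hh.trans hlt) hh]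
  calc T (h' • x) i * h ≤ h' / h * T (h • x) i * h := by gcongr
    _ = T (h • x) i * h' := by field_simp

theorem ConeScalable.apply_smul_le (hT : ConeScalable T) (hx : 0 ≤ x) {s : ℝ} (hs : 1 ≤ s)
    (i : ι) : T (s • x) i ≤ s * T x i := by
  have := hT.apply_smul_div_le hx one_pos hs i
  rwa [one_smul, div_one, div_le_iff₀ (one_pos.trans_le hs), mul_comm] at this

theorem ConeScalable.eigenvalue_le_of_norm_le {ν : (ι → ℝ) → ℝ} [Fintype ι]
    (hT : ConeScalable T) (hTm : ConeMonotone T)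
    (hνs : ∀ (a : ℝ) (x : ι → ℝ), ν (a • x) = |a| * ν x)
    (hνm : ConeMonotone ν) {p₁ p₂ : ι → ℝ} {r₁ r₂ : ℝ}
    (hp₁ : ∀ i, 0 < p₁ i) (hp₂ : ∀ i, 0 < p₂ i) (hT₁ : T p₁ = r₁ • p₁) (hT₂ : T p₂ = r₂ • p₂)
    (hν₂ : 0 < ν p₂) (hν : ν p₂ ≤ ν p₁) : r₁ ≤ r₂ := by
  have hp₁0 : 0 ≤ p₁ := fun i => (hp₁ i).le
  have hp₁ne : p₁ ≠ 0 := by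
    rintro rfl
    linarith [apply_zero_of_homogeneous hνs]
  obtain ⟨s, hs, j, hle, hj⟩ := exists_le_smul_apply_eq hp₂ hp₁0 hp₁ne
  -- a contraction `s < 1` would make `ν p₁ ≤ s ν p₂` smaller than `ν p₂`
  have hs1 : 1 ≤ s := by
    by_contra! hs1
    have := hνm _ _ hp₁0 hle
    rw [hνs, abs_of_pos hs] at this
    nlinarith
  refine le_of_mul_le_mul_right ?_ (hp₁ j)
  calc r₁ * p₁ j = T p₁ j := by rw [hT₁]; rfl
    _ ≤ T (s • p₂) j := hTm _ _ hp₁0 hle j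
    _ ≤ s * T p₂ j := hT.apply_smul_le (fun i => (hp₂ i).le) hs1 j
    _ = r₂ * p₁ j := by rw [hT₂, hj, Pi.smul_apply, smul_eq_mul]; ring

namespace HasAsymptoticMap

theorem le_apply_smul_div (hS : HasAsymptoticMap T S) (hT : ConeScalable T) (hx : 0 ≤ x)
    {h : ℝ} (hh : 0 < h) (i : ι) : S x i ≤ T (h • x) i / h :=
  le_of_tendsto (hS x hx i) (eventually_atTop.2 ⟨h, fun _ hh' => hT.apply_smul_div_le hx hh hh' i⟩)

theorem le_apply (hS : HasAsymptoticMap T S) (hT : ConeScalable T) (hx : 0 ≤ x) : S x ≤ T x :=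
  fun i => by simpa using hS.le_apply_smul_div hT hx one_pos i

theorem mono (hS : HasAsymptoticMap T S) (hT : ConeMonotone T) (hx : 0 ≤ x) (hxy : x ≤ y) :
    S x ≤ S y := fun i =>
  le_of_tendsto_of_tendsto (hS x hx i) (hS y (hx.trans hxy) i) <|
    (eventually_gt_atTop 0).mono fun _ hh => div_le_div_of_nonneg_right
      (hT _ _ (smul_nonneg hh.le hx) (smul_le_smul_of_nonneg_left hxy hh.le) i) hh.le

theorem map_smul (hS : HasAsymptoticMap T S) (hx : 0 ≤ x) {c : ℝ} (hc : 0 < c) :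
    S (c • x) = c • S x := by
  funext i
  have hlim : Tendsto (fun h : ℝ => c * (T ((c * h) • x) i / (c * h))) atTop (𝓝 (c * S x i)) :=
    ((hS x hx i).comp (tendsto_id.const_mul_atTop hc)).const_mul c
  refine tendsto_nhds_unique (hS _ (smul_nonneg hc.le hx) i) (hlim.congr' ?_)
  filter_upwards [eventually_gt_atTop 0] with h hh
  rw [smul_smul, mul_comm h c]
  field_simp

theorem eigenvalue_le_of_pos_eigenvector [Fintype ι] (hS : HasAsymptoticMap T S)
    (hT : ConeScalable T) (hTm : ConeMonotone T) {p : ι → ℝ} {μ r : ℝ} (hx0 : 0 ≤ x)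
    (hx : x ≠ 0) (hSx : S x = μ • x) (hp : ∀ i, 0 < p i) (hTp : T p = r • p) : μ ≤ r := by
  obtain ⟨s, hs, j, hle, hj⟩ := exists_le_smul_apply_eq hp hx0 hx
  have hp0 : 0 ≤ p := fun i => (hp i).le
  refine le_of_mul_le_mul_right ?_ (hj ▸ mul_pos hs (hp j))
  calc μ * x j = S x j := by rw [hSx]; rfl
    _ ≤ S (s • p) j := hS.mono hTm hx0 hle j
    _ = s * S p j := by rw [hS.map_smul hp0 hs]; rfl
    _ ≤ s * T p j := by gcongr; exact hS.le_apply hT hp0 j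
    _ = r * x j := by rw [hTp, hj, Pi.smul_apply, smul_eq_mul]; ring

end HasAsymptoticMap

end AsymptoticMap

namespace HasAsymptoticMap

variable {T S : (ι → ℝ) → ι → ℝ} {α : Type*} {l : Filter α} [l.NeBot] {q μ : α → ℝ}
  {x : α → ι → ℝ} {y : ι → ℝ} {L : ℝ}

theorem smul_le_of_tendsto (hS : HasAsymptoticMap T S) (hT : ConeScalable T)
    (hTc : ContinuousOn T {x | 0 ≤ x}) (hq : Tendsto q l atTop) (hx0 : ∀ n, 0 ≤ x n)
    (hy0 : 0 ≤ y) (hxy : Tendsto x l (𝓝 y)) (hμ : Tendsto μ l (𝓝 L))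
    (heig : ∀ n i, T (q n • x n) i / q n = μ n * x n i) : L • y ≤ S y := by
  intro i
  have hbound : ∀ h > 0, L * y i ≤ T (h • y) i / h := by
    intro h hh
    have hTx : Tendsto (fun n => T (h • x n) i / h) l (𝓝 (T (h • y) i / h)) := by
      have hxy' : Tendsto (fun n => h • x n) l (𝓝[{x | 0 ≤ x}] (h • y)) :=
        tendsto_nhdsWithin_iff.2
          ⟨hxy.const_smul h, Eventually.of_forall fun n => smul_nonneg hh.le (hx0 n)⟩
      exact (tendsto_pi_nhds.1
        ((hTc _ (smul_nonneg hh.le hy0)).tendsto.comp hxy') i).div_const h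
    refine le_of_tendsto_of_tendsto (hμ.mul (tendsto_pi_nhds.1 hxy i)) hTx ?_
    filter_upwards [hq.eventually_ge_atTop h] with n hn
    rw [← heig n i]
    exact hT.apply_smul_div_le (hx0 n) hh hn i
  exact ge_of_tendsto (hS y hy0 i) ((eventually_gt_atTop 0).mono hbound)

theorem le_smul_of_tendsto [Finite ι] (hS : HasAsymptoticMap T S) (hT : ConeScalable T)
    (hTm : ConeMonotone T) (hq : Tendsto q l atTop) (hx0 : ∀ n, 0 ≤ x n) (hy0 : 0 ≤ y)
    (hxy : Tendsto x l (𝓝 y)) (hμ : Tendsto μ l (𝓝 L))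
    (heig : ∀ n i, T (q n • x n) i / q n = μ n * x n i) : S y ≤ L • y := by
  intro i
  refine le_of_forall_mem_Ioo_mul_le fun c hc => ?_
  have hev : ∀ᶠ n in l, c • y ≤ x n := by
    refine eventually_all.2 fun k => ?_
    rcases (hy0 k).eq_or_lt with hk | hk
    · exact Eventually.of_forall fun n => by simpa [← hk] using hx0 n k
    · exact ((tendsto_pi_nhds.1 hxy k).eventually
        (eventually_gt_nhds (mul_lt_of_lt_one_left hk hc.2))).mono fun n hn => hn.le
  refine ge_of_tendsto (hμ.mul (tendsto_pi_nhds.1 hxy i)) ?_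
  filter_upwards [hev, hq.eventually_gt_atTop 0] with n hn hqn
  calc c * S y i = S (c • y) i := by rw [hS.map_smul hy0 hc.1]; rfl
    _ ≤ S (x n) i := hS.mono hTm (smul_nonneg hc.1.le hy0) hn i
    _ ≤ T (q n • x n) i / q n := hS.le_apply_smul_div hT (hx0 n) hqn i
    _ = μ n * x n i := heig n i

theorem eq_smul_of_tendsto [Finite ι] (hS : HasAsymptoticMap T S) (hT : ConeScalable T)
    (hTm : ConeMonotone T) (hTc : ContinuousOn T {x | 0 ≤ x}) (hq : Tendsto q l atTop)
    (hx0 : ∀ n, 0 ≤ x n) (hy0 : 0 ≤ y) (hxy : Tendsto x l (𝓝 y)) (hμ : Tendsto μ l (𝓝 L))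
    (heig : ∀ n i, T (q n • x n) i / q n = μ n * x n i) : S y = L • y :=
  le_antisymm (hS.le_smul_of_tendsto hT hTm hq hx0 hy0 hxy hμ heig)
    (hS.smul_le_of_tendsto hT hTc hq hx0 hy0 hxy hμ heig)

end HasAsymptoticMap

theorem apply_smul_inv_smul_div_eq {T : (ι → ℝ) → ι → ℝ} {p : ι → ℝ} {q r : ℝ} (hq : q ≠ 0)
    (hTp : T p = r • p) (i : ι) : T (q • q⁻¹ • p) i / q = r * (q⁻¹ • p) i := by
  rw [smul_inv_smul₀ hq, hTp, Pi.smul_apply, Pi.smul_apply, smul_eq_mul, smul_eq_mul]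
  field_simp

theorem stmt12_general {N : ℕ} (T : (Fin N → ℝ) → (Fin N → ℝ))
    (hmono : ∀ x y : Fin N → ℝ, 0 ≤ x → x ≤ y → T x ≤ T y)
    (hscal : ∀ x : Fin N → ℝ, 0 ≤ x → ∀ α : ℝ, 1 < α → ∀ i, T (α • x) i < α * T x i)
    (hcont : ContinuousOn T {x : Fin N → ℝ | 0 ≤ x})
    (νa : (Fin N → ℝ) → ℝ)
    (hνa0 : ∀ x, νa x = 0 ↔ x = 0)
    (hνas : ∀ (a : ℝ) (x : Fin N → ℝ), νa (a • x) = |a| * νa x)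
    (hνam : ∀ x y : Fin N → ℝ, 0 ≤ x → x ≤ y → νa x ≤ νa y)
    (Tinf : (Fin N → ℝ) → (Fin N → ℝ))
    (hTinf : ∀ x : Fin N → ℝ, 0 ≤ x → ∀ i,
      Tendsto (fun h : ℝ => T (h • x) i / h) atTop (nhds (Tinf x i)))
    (p : ℝ → Fin N → ℝ) (lam : ℝ → ℝ)
    (hsol : ∀ q : ℝ, 0 < q →
      (∀ i, 0 < p q i) ∧ 0 < lam q ∧ T (p q) = lam q • p q ∧ νa (p q) = q) :
    (∀ q₁ q₂ : ℝ, 0 < q₂ → q₂ ≤ q₁ → lam q₁ ≤ lam q₂) ∧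
    Tendsto lam atTop
      (nhds (sSup {μ : ℝ | 0 ≤ μ ∧
        ∃ x : Fin N → ℝ, 0 ≤ x ∧ x ≠ 0 ∧ Tinf x = μ • x})) := by
  have hanti : ∀ q₁ q₂ : ℝ, 0 < q₂ → q₂ ≤ q₁ → lam q₁ ≤ lam q₂ := by
    intro q₁ q₂ hq₂ hq
    obtain ⟨hp₁, -, hT₁, hν₁⟩ := hsol q₁ (hq₂.trans_le hq)
    obtain ⟨hp₂, -, hT₂, hν₂⟩ := hsol q₂ hq₂
    exact ConeScalable.eigenvalue_le_of_norm_le hscal hmono hνas hνam hp₁ hp₂ hT₁ hT₂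
      (by rwa [hν₂]) (by rwa [hν₁, hν₂])
  obtain ⟨L, hL⟩ := AntitoneOn.exists_tendsto_atTop (a := 0)
    (fun a ha b _ hab => hanti b a ha hab) ⟨0, by rintro _ ⟨q, hq, rfl⟩; exact (hsol q hq).2.1.le⟩
  suffices hL' : IsGreatest (coneEigenvalues Tinf) L from ⟨hanti, hL'.csSup_eq ▸ hL⟩
  refine ⟨⟨ge_of_tendsto hL ((eventually_gt_atTop 0).mono fun q hq => (hsol q hq).2.1.le), ?_⟩, ?_⟩
  · set q : ℕ → ℝ := fun n => n + 1
    have hq : ∀ n, 0 < q n := fun n => by positivity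
    set x : ℕ → Fin N → ℝ := fun n => (q n)⁻¹ • p (q n)
    have hx0 : ∀ n, 0 ≤ x n := fun n =>
      smul_nonneg (inv_nonneg.2 (hq n).le) fun i => ((hsol _ (hq n)).1 i).le
    have hx1 : ∀ n, νa (x n) = 1 := fun n => by
      rw [hνas, abs_inv, abs_of_pos (hq n), (hsol _ (hq n)).2.2.2, inv_mul_cancel₀ (hq n).ne']
    obtain ⟨y, hy0, hy, φ, hφ, hxy⟩ := exists_subseq_tendsto_ne_zero hνa0 hνas hνam hx0 hx1
    have hqφ : Tendsto (q ∘ φ) atTop atTop :=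
      (tendsto_atTop_add_const_right _ 1 tendsto_natCast_atTop_atTop).comp hφ.tendsto_atTop
    exact ⟨y, hy0, hy, HasAsymptoticMap.eq_smul_of_tendsto hTinf hscal hmono hcont hqφ
      (fun n => hx0 (φ n)) hy0 hxy (hL.comp hqφ) fun n =>
        apply_smul_inv_smul_div_eq (hq (φ n)).ne' (hsol _ (hq (φ n))).2.2.1⟩
  · rintro μ ⟨-, x, hx0, hx, hSx⟩
    refine ge_of_tendsto hL ((eventually_gt_atTop 0).mono fun q hq => ?_)
    obtain ⟨hp, -, hTp, -⟩ := hsol q hq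
    exact HasAsymptoticMap.eigenvalue_le_of_pos_eigenvector hTinf hscal hmono hx0 hx hSx hp hTp

/-- For a continuous SI mapping T, the eigenvalues λ_{p̄} of the
conditional eigenvalue problems with budget p̄ form a nonincreasing function of
p̄ whose limit as p̄ → ∞ exists and equals the spectral radius of the
asymptotic mapping T_∞. -/
theorem stmt12 {N : ℕ} (T : (Fin N → ℝ) → (Fin N → ℝ))
    (hpos : ∀ x : Fin N → ℝ, 0 ≤ x → ∀ i, 0 < T x i)
    (hmono : ∀ x y : Fin N → ℝ, 0 ≤ x → x ≤ y → T x ≤ T y)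
    (hscal : ∀ x : Fin N → ℝ, 0 ≤ x → ∀ α : ℝ, 1 < α → ∀ i, T (α • x) i < α * T x i)
    (hcont : ContinuousOn T {x : Fin N → ℝ | 0 ≤ x})
    (νa : (Fin N → ℝ) → ℝ)
    (hνa0 : ∀ x, νa x = 0 ↔ x = 0)
    (hνas : ∀ (a : ℝ) (x : Fin N → ℝ), νa (a • x) = |a| * νa x)
    (hνat : ∀ x y : Fin N → ℝ, νa (x + y) ≤ νa x + νa y)
    (hνam : ∀ x y : Fin N → ℝ, 0 ≤ x → x ≤ y → νa x ≤ νa y)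
    (Tinf : (Fin N → ℝ) → (Fin N → ℝ))
    (hTinf : ∀ x : Fin N → ℝ, 0 ≤ x → ∀ i,
      Tendsto (fun h : ℝ => T (h • x) i / h) atTop (nhds (Tinf x i)))
    (p : ℝ → Fin N → ℝ) (lam : ℝ → ℝ)
    (hsol : ∀ q : ℝ, 0 < q →
      (∀ i, 0 < p q i) ∧ 0 < lam q ∧ T (p q) = lam q • p q ∧ νa (p q) = q) :
    (∀ q₁ q₂ : ℝ, 0 < q₂ → q₂ ≤ q₁ → lam q₁ ≤ lam q₂) ∧
    Tendsto lam atTop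
      (nhds (sSup {μ : ℝ | 0 ≤ μ ∧
        ∃ x : Fin N → ℝ, 0 ≤ x ∧ x ≠ 0 ∧ Tinf x = μ • x})) :=
  stmt12_general T hmono hscal hcont νa hνa0 hνas hνam Tinf hTinf p lam hsol
end

section
/- Let T : ℝ^N_+ → ℝ^N_{++} be a continuous SI mapping, ‖·‖_a a monotone norm on ℝ^N, and suppose λ_∞ := ρ(T_∞) > 0, where T_∞ is the asymptotic mapping of T. Suppose for each p̄ > 0 the pair (P(p̄), U(p̄)) ∈ ℝ^N_{++} × ℝ_{++} satisfies P(p̄) = U(p̄) T(P(p̄)) and ‖P(p̄)‖_a = p̄. Then for every p̄ > 0: U(p̄) ≤ p̄/‖T(0)‖_a if p̄ ≤ ‖T(0)‖_a/λ_∞, and U(p̄) ≤ 1/λ_∞ otherwise; equivalently, U(p̄) ≤ min{ p̄/‖T(0)‖_a , 1/λ_∞ } for all p̄ > 0. -/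
open Filter Topology

/-!
Since `T` is monotone, `P = U • T P ≥ U • T 0`, and the monotone norm turns this into
`U ‖T 0‖ ≤ ‖P‖ = p̄`. For the other bound take an eigenvector `x ≥ 0` of `T_∞` with eigenvalue `μ`
and scale it to touch `P` from below: `c • x ≤ P` with equality at a coordinate `i`.
Scalability makes `h ↦ T(h • x)_i / h` nonincreasing, so
`μ x_i = T_∞(x)_i ≤ T(c • x)_i / c ≤ T(P)_i / c = x_i / U`, i.e. `μ ≤ 1 / U`;
taking the supremum over `μ` gives `λ_∞ ≤ 1 / U`.
-/

section

variable {ι : Type*}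

theorem le_div_of_tendsto_of_scalable {T : (ι → ℝ) → ι → ℝ}
    (hscal : ∀ x : ι → ℝ, 0 ≤ x → ∀ α : ℝ, 1 < α → ∀ i, T (α • x) i < α * T x i)
    {x : ι → ℝ} (hx : 0 ≤ x) {i : ι} {L : ℝ}
    (hL : Tendsto (fun h : ℝ => T (h • x) i / h) atTop (𝓝 L)) {c : ℝ} (hc : 0 < c) :
    L ≤ T (c • x) i / c := by
  refine le_of_tendsto hL ?_
  filter_upwards [eventually_gt_atTop c] with h hch
  have hlt := hscal (c • x) (smul_nonneg hc.le hx) (h / c) ((one_lt_div hc).2 hch) i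
  rw [smul_smul, div_mul_cancel₀ _ hc.ne', div_mul_eq_mul_div, lt_div_iff₀ hc] at hlt
  rw [div_le_div_iff₀ (hc.trans hch) hc]
  linarith

theorem exists_smul_le_of_pos [Fintype ι] {x p : ι → ℝ} (hx : 0 ≤ x) (hx0 : x ≠ 0)
    (hp : ∀ i, 0 < p i) : ∃ c > 0, ∃ i, 0 < x i ∧ c • x ≤ p ∧ c * x i = p i := by
  classical
  obtain ⟨j, hj⟩ := Function.ne_iff.1 hx0
  have hsupp : (Finset.univ.filter fun i => 0 < x i : Finset ι).Nonempty :=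
    ⟨j, by simpa using (hx j).lt_of_ne' hj⟩
  obtain ⟨i, hi, hmin⟩ := Finset.exists_min_image _ (fun i => p i / x i) hsupp
  have hxi : 0 < x i := (Finset.mem_filter.1 hi).2
  refine ⟨p i / x i, div_pos (hp i) hxi, i, hxi, fun k => ?_, div_mul_cancel₀ _ hxi.ne'⟩
  rcases (hx k).lt_or_eq with hxk | hxk
  · exact (le_div_iff₀ hxk).1 (hmin k (by simpa using hxk))
  · simpa [← hxk] using (hp k).le

theorem mul_le_one_of_asymptotic_eigen [Fintype ι] {T Tinf : (ι → ℝ) → ι → ℝ}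
    (hmono : ∀ x y : ι → ℝ, 0 ≤ x → x ≤ y → T x ≤ T y)
    (hscal : ∀ x : ι → ℝ, 0 ≤ x → ∀ α : ℝ, 1 < α → ∀ i, T (α • x) i < α * T x i)
    (hTinf : ∀ x : ι → ℝ, 0 ≤ x → ∀ i,
      Tendsto (fun h : ℝ => T (h • x) i / h) atTop (𝓝 (Tinf x i)))
    {P : ι → ℝ} {u : ℝ} (hP : ∀ i, 0 < P i) (hu : 0 ≤ u) (hPeq : P = u • T P)
    {μ : ℝ} {x : ι → ℝ} (hx : 0 ≤ x) (hx0 : x ≠ 0) (heig : Tinf x = μ • x) :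
    μ * u ≤ 1 := by
  obtain ⟨c, hc, i, hxi, hle, hci⟩ := exists_smul_le_of_pos hx hx0 hP
  have hasymp : μ * x i ≤ T (c • x) i / c := by
    simpa [heig] using le_div_of_tendsto_of_scalable hscal hx (hTinf x hx i) hc
  have hmono_i : T (c • x) i ≤ T P i := hmono _ _ (smul_nonneg hc.le hx) hle i
  have hPi : P i = u * T P i := congrFun hPeq i
  have hscaled : μ * x i * c ≤ T P i := ((le_div_iff₀ hc).1 hasymp).trans hmono_i
  refine le_of_mul_le_mul_right ?_ (mul_pos hc hxi)
  calc μ * u * (c * x i) = u * (μ * x i * c) := by ring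
    _ ≤ u * T P i := by gcongr
    _ = 1 * (c * x i) := by rw [← hPi, hci, one_mul]

theorem mul_le_of_eq_smul_of_monotone {T : (ι → ℝ) → ι → ℝ} {ν : (ι → ℝ) → ℝ}
    (hmono : ∀ x y : ι → ℝ, 0 ≤ x → x ≤ y → T x ≤ T y)
    (hνs : ∀ (a : ℝ) (x : ι → ℝ), ν (a • x) = |a| * ν x)
    (hνm : ∀ x y : ι → ℝ, 0 ≤ x → x ≤ y → ν x ≤ ν y)
    (hT0 : 0 ≤ T 0) {P : ι → ℝ} {u : ℝ} (hP : 0 ≤ P) (hu : 0 ≤ u) (hPeq : P = u • T P) :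
    u * ν (T 0) ≤ ν P := by
  have hle : u • T 0 ≤ P := hPeq ▸ smul_le_smul_of_nonneg_left (hmono 0 P le_rfl hP) hu
  simpa [hνs, abs_of_nonneg hu] using hνm _ _ (smul_nonneg hu hT0) hle

theorem pos_of_monotone_of_ne_zero {ν : (ι → ℝ) → ℝ} (hν0 : ∀ x, ν x = 0 ↔ x = 0)
    (hνm : ∀ x y : ι → ℝ, 0 ≤ x → x ≤ y → ν x ≤ ν y) {v : ι → ℝ} (hv : 0 ≤ v) (hv0 : v ≠ 0) :
    0 < ν v :=
  ((hν0 0).2 rfl ▸ hνm 0 v le_rfl hv).lt_of_ne' (mt (hν0 v).1 hv0)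

end

theorem stmt14_general {N : ℕ} (T : (Fin N → ℝ) → (Fin N → ℝ))
    (hpos : ∀ x : Fin N → ℝ, 0 ≤ x → ∀ i, 0 < T x i)
    (hmono : ∀ x y : Fin N → ℝ, 0 ≤ x → x ≤ y → T x ≤ T y)
    (hscal : ∀ x : Fin N → ℝ, 0 ≤ x → ∀ α : ℝ, 1 < α → ∀ i, T (α • x) i < α * T x i)
    (νa : (Fin N → ℝ) → ℝ)
    (hνa0 : ∀ x, νa x = 0 ↔ x = 0)
    (hνas : ∀ (a : ℝ) (x : Fin N → ℝ), νa (a • x) = |a| * νa x)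
    (hνam : ∀ x y : Fin N → ℝ, 0 ≤ x → x ≤ y → νa x ≤ νa y)
    (Tinf : (Fin N → ℝ) → (Fin N → ℝ))
    (hTinf : ∀ x : Fin N → ℝ, 0 ≤ x → ∀ i,
      Tendsto (fun h : ℝ => T (h • x) i / h) atTop (nhds (Tinf x i)))
    (laminf : ℝ)
    (hrad : laminf = sSup {μ : ℝ | 0 ≤ μ ∧
      ∃ x : Fin N → ℝ, 0 ≤ x ∧ x ≠ 0 ∧ Tinf x = μ • x})
    (hlaminf_pos : 0 < laminf)
    (P : ℝ → Fin N → ℝ) (U : ℝ → ℝ)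
    (hsol : ∀ q : ℝ, 0 < q →
      (∀ i, 0 < P q i) ∧ 0 < U q ∧ P q = U q • T (P q) ∧ νa (P q) = q) :
    ∀ q : ℝ, 0 < q →
      (q ≤ νa (T 0) / laminf → U q ≤ q / νa (T 0)) ∧
      (νa (T 0) / laminf < q → U q ≤ 1 / laminf) ∧
      U q ≤ min (q / νa (T 0)) (1 / laminf) := by
  intro q hq
  obtain ⟨hPpos, hUpos, hPeq, hPnorm⟩ := hsol q hq
  -- `sSup ∅ = 0`, so `0 < laminf` yields an eigenvector; hence `Fin N` is inhabited and `T 0 ≠ 0`.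
  have hspec : {μ : ℝ | 0 ≤ μ ∧ ∃ x : Fin N → ℝ, 0 ≤ x ∧ x ≠ 0 ∧ Tinf x = μ • x}.Nonempty := by
    by_contra hempty
    rw [Set.not_nonempty_iff_eq_empty] at hempty
    simp [hrad, hempty] at hlaminf_pos
  obtain ⟨-, -, x, -, hx0, -⟩ := hspec
  obtain ⟨i, -⟩ := Function.ne_iff.1 hx0
  have hT0 : 0 ≤ T 0 := fun j => (hpos 0 le_rfl j).le
  have hνT0 : 0 < νa (T 0) :=
    pos_of_monotone_of_ne_zero hνa0 hνam hT0 (Function.ne_iff.2 ⟨i, (hpos 0 le_rfl i).ne'⟩)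
  have hU1 : U q ≤ q / νa (T 0) := by
    rw [le_div_iff₀ hνT0]
    exact (mul_le_of_eq_smul_of_monotone hmono hνas hνam hT0 (fun j => (hPpos j).le) hUpos.le
      hPeq).trans_eq hPnorm
  have hU2 : U q ≤ 1 / laminf := by
    have hsup : laminf ≤ 1 / U q := by
      rw [hrad]
      refine Real.sSup_le (fun μ ⟨_, y, hy, hy0, heig⟩ => ?_) (by positivity)
      rw [le_div_iff₀ hUpos]
      exact mul_le_one_of_asymptotic_eigen hmono hscal hTinf hPpos hUpos.le hPeq hy hy0 heig
    rwa [le_div_iff₀ hlaminf_pos, mul_comm, ← le_div_iff₀ hUpos]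
  exact ⟨fun _ => hU1, fun _ => hU2, le_min hU1 hU2⟩

/-- Upper bound on the utility function of the canonical max-min
utility problem: U(p̄) ≤ p̄/‖T(0)‖_a for p̄ ≤ ‖T(0)‖_a/λ_∞ and U(p̄) ≤ 1/λ_∞
otherwise; equivalently U(p̄) ≤ min{p̄/‖T(0)‖_a, 1/λ_∞}. -/
theorem stmt14 {N : ℕ} (T : (Fin N → ℝ) → (Fin N → ℝ))
    (hpos : ∀ x : Fin N → ℝ, 0 ≤ x → ∀ i, 0 < T x i)
    (hmono : ∀ x y : Fin N → ℝ, 0 ≤ x → x ≤ y → T x ≤ T y)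
    (hscal : ∀ x : Fin N → ℝ, 0 ≤ x → ∀ α : ℝ, 1 < α → ∀ i, T (α • x) i < α * T x i)
    (hcont : ContinuousOn T {x : Fin N → ℝ | 0 ≤ x})
    (νa : (Fin N → ℝ) → ℝ)
    (hνa0 : ∀ x, νa x = 0 ↔ x = 0)
    (hνas : ∀ (a : ℝ) (x : Fin N → ℝ), νa (a • x) = |a| * νa x)
    (hνat : ∀ x y : Fin N → ℝ, νa (x + y) ≤ νa x + νa y)
    (hνam : ∀ x y : Fin N → ℝ, 0 ≤ x → x ≤ y → νa x ≤ νa y)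
    (Tinf : (Fin N → ℝ) → (Fin N → ℝ))
    (hTinf : ∀ x : Fin N → ℝ, 0 ≤ x → ∀ i,
      Tendsto (fun h : ℝ => T (h • x) i / h) atTop (nhds (Tinf x i)))
    (laminf : ℝ)
    (hrad : laminf = sSup {μ : ℝ | 0 ≤ μ ∧
      ∃ x : Fin N → ℝ, 0 ≤ x ∧ x ≠ 0 ∧ Tinf x = μ • x})
    (hlaminf_pos : 0 < laminf)
    (P : ℝ → Fin N → ℝ) (U : ℝ → ℝ)
    (hsol : ∀ q : ℝ, 0 < q →
      (∀ i, 0 < P q i) ∧ 0 < U q ∧ P q = U q • T (P q) ∧ νa (P q) = q) :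
    ∀ q : ℝ, 0 < q →
      (q ≤ νa (T 0) / laminf → U q ≤ q / νa (T 0)) ∧
      (νa (T 0) / laminf < q → U q ≤ 1 / laminf) ∧
      U q ≤ min (q / νa (T 0)) (1 / laminf) :=
  stmt14_general T hpos hmono hscal νa hνa0 hνas hνam Tinf hTinf laminf hrad hlaminf_pos P U hsol
end

section
/- Let T : ℝ^N_+ → ℝ^N_{++} be a continuous SI mapping, ‖·‖_a and ‖·‖_b monotone norms on ℝ^N, and suppose λ_∞ := ρ(T_∞) > 0, where T_∞ is the asymptotic mapping of T. Suppose for each p̄ > 0 the pair (P(p̄), U(p̄)) ∈ ℝ^N_{++} × ℝ_{++} satisfies P(p̄) = U(p̄) T(P(p̄)) and ‖P(p̄)‖_a = p̄, and set E(p̄) := U(p̄)/‖P(p̄)‖_b. Let α > 0 be any scalar with ‖x‖_a ≤ α‖x‖_b for all x ∈ ℝ^N. Then for every p̄ > 0: E(p̄) ≤ min{ 1/‖T(0)‖_b , α/(λ_∞ p̄) }. -/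
open Filter Topology

/-!
At the solution `p = P(p̄)` we have `T p = U(p̄)⁻¹ • p`, so `E(p̄) = 1 / ‖T p‖_b`, and monotonicity of
`T` and of `‖·‖_b` gives the first bound. For the second, scalability gives `T_∞ p ≤ T p = U(p̄)⁻¹ • p`;
since `T_∞` is monotone and positively homogeneous, comparing any nonnegative eigenvector of `T_∞`,
scaled to touch `p` from below, with `p` shows `λ_∞ ≤ U(p̄)⁻¹`. Combined with
`p̄ = ‖p‖_a ≤ α ‖p‖_b` this is `E(p̄) ≤ α / (λ_∞ p̄)`.
-/

variable {ι : Type*}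

def IsAsymptoticMap (T Tinf : (ι → ℝ) → ι → ℝ) : Prop :=
  ∀ x : ι → ℝ, 0 ≤ x → ∀ i, Tendsto (fun h : ℝ => T (h • x) i / h) atTop (𝓝 (Tinf x i))

noncomputable def coneSpectralRadius (S : (ι → ℝ) → ι → ℝ) : ℝ :=
  sSup {μ : ℝ | 0 ≤ μ ∧ ∃ x : ι → ℝ, 0 ≤ x ∧ x ≠ 0 ∧ S x = μ • x}

theorem exists_smul_le_of_pos_s15 [Finite ι] {y p : ι → ℝ} (hy : 0 ≤ y) (hy0 : y ≠ 0)
    (hp : ∀ i, 0 < p i) : ∃ t : ℝ, 0 < t ∧ ∃ i, t • y ≤ p ∧ t * y i = p i := by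
  obtain ⟨j, hj⟩ := Function.ne_iff.1 hy0
  have : Nonempty ι := ⟨j⟩
  obtain ⟨i, hi⟩ := Finite.exists_max fun k => y k / p k
  have hyi : 0 < y i :=
    (div_pos_iff_of_pos_right (hp i)).1 <|
      (div_pos ((hy j).lt_of_ne (Ne.symm hj)) (hp j)).trans_le (hi j)
  refine ⟨p i / y i, div_pos (hp i) hyi, i, fun k => ?_, div_mul_cancel₀ _ hyi.ne'⟩
  have hk := (div_le_div_iff₀ (hp k) (hp i)).1 (hi k)
  rw [Pi.smul_apply, smul_eq_mul, div_mul_eq_mul_div, div_le_iff₀ hyi]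
  linarith

theorem eigenvalue_le_of_le_smul [Finite ι] {S : (ι → ℝ) → ι → ℝ}
    (hmono : MonotoneOn S (Set.Ici 0))
    (hhom : ∀ c : ℝ, 0 < c → ∀ x : ι → ℝ, 0 ≤ x → S (c • x) = c • S x)
    {p : ι → ℝ} (hp : ∀ i, 0 < p i) {c : ℝ} (hSp : S p ≤ c • p)
    {μ : ℝ} {y : ι → ℝ} (hy : 0 ≤ y) (hy0 : y ≠ 0) (hSy : S y = μ • y) : μ ≤ c := by
  obtain ⟨t, ht, i, hty, hti⟩ := exists_smul_le_of_pos_s15 hy hy0 hp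
  have hle : S (t • y) ≤ S p :=
    hmono (smul_nonneg ht.le hy) (fun k => (hp k).le) hty
  have hi : μ * p i ≤ c * p i := by
    have := (hle.trans hSp) i
    rw [hhom t ht y hy, hSy] at this
    simp only [Pi.smul_apply, smul_eq_mul] at this
    calc μ * p i = t * (μ * y i) := by rw [← hti]; ring
      _ ≤ c * p i := this
  exact le_of_mul_le_mul_right hi (hp i)

theorem coneSpectralRadius_le_of_le_smul [Finite ι] {S : (ι → ℝ) → ι → ℝ}
    (hmono : MonotoneOn S (Set.Ici 0))
    (hhom : ∀ c : ℝ, 0 < c → ∀ x : ι → ℝ, 0 ≤ x → S (c • x) = c • S x)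
    {p : ι → ℝ} (hp : ∀ i, 0 < p i) {c : ℝ} (hc : 0 ≤ c) (hSp : S p ≤ c • p) :
    coneSpectralRadius S ≤ c :=
  Real.sSup_le (fun _ ⟨_, _, hy, hy0, hSy⟩ => eigenvalue_le_of_le_smul hmono hhom hp hSp hy hy0 hSy)
    hc

theorem nonempty_of_coneSpectralRadius_pos {S : (ι → ℝ) → ι → ℝ}
    (h : 0 < coneSpectralRadius S) : Nonempty ι := by
  by_contra hι
  rw [not_nonempty_iff] at hι
  have hempty : {μ : ℝ | 0 ≤ μ ∧ ∃ x : ι → ℝ, 0 ≤ x ∧ x ≠ 0 ∧ S x = μ • x} = ∅ :=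
    Set.eq_empty_of_forall_notMem fun _ ⟨_, x, _, hx, _⟩ => hx (Subsingleton.elim x 0)
  rw [coneSpectralRadius, hempty, Real.sSup_empty] at h
  exact h.false

namespace IsAsymptoticMap

variable {T Tinf : (ι → ℝ) → ι → ℝ}

theorem map_smul (hT : IsAsymptoticMap T Tinf) {c : ℝ} (hc : 0 < c) {x : ι → ℝ} (hx : 0 ≤ x) :
    Tinf (c • x) = c • Tinf x := by
  ext i
  have hcx : 0 ≤ c • x := smul_nonneg hc.le hx
  have hlim : Tendsto (fun h : ℝ => c * (T ((c * h) • x) i / (c * h))) atTop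
      (𝓝 (c * Tinf x i)) :=
    ((hT x hx i).comp (tendsto_id.const_mul_atTop hc)).const_mul c
  refine tendsto_nhds_unique (hT (c • x) hcx i) (hlim.congr' ?_)
  filter_upwards [eventually_gt_atTop 0] with h hh
  rw [mul_comm c h, mul_smul]
  field_simp

theorem monotoneOn (hT : IsAsymptoticMap T Tinf) (hmono : MonotoneOn T (Set.Ici 0)) :
    MonotoneOn Tinf (Set.Ici 0) := by
  intro x hx y hy hxy i
  refine le_of_tendsto_of_tendsto (hT x hx i) (hT y hy i) ?_
  filter_upwards [eventually_gt_atTop 0] with h hh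
  have hle : T (h • x) ≤ T (h • y) :=
    hmono (smul_nonneg hh.le (Set.mem_Ici.1 hx)) (smul_nonneg hh.le (Set.mem_Ici.1 hy))
      (smul_le_smul_of_nonneg_left hxy hh.le)
  exact div_le_div_of_nonneg_right (hle i) hh.le

theorem le_of_smul_le (hT : IsAsymptoticMap T Tinf)
    (hsub : ∀ x : ι → ℝ, 0 ≤ x → ∀ h : ℝ, 1 < h → T (h • x) ≤ h • T x) {x : ι → ℝ}
    (hx : 0 ≤ x) : Tinf x ≤ T x := by
  intro i
  refine le_of_tendsto (hT x hx i) ?_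
  filter_upwards [eventually_gt_atTop 1] with h hh
  rw [div_le_iff₀ (one_pos.trans hh), mul_comm]
  exact hsub x hx h hh i

theorem coneSpectralRadius_le_inv_of_eq_smul [Finite ι] (hT : IsAsymptoticMap T Tinf)
    (hmono : MonotoneOn T (Set.Ici 0))
    (hsub : ∀ x : ι → ℝ, 0 ≤ x → ∀ h : ℝ, 1 < h → T (h • x) ≤ h • T x)
    {p : ι → ℝ} (hp : ∀ i, 0 < p i) {u : ℝ} (hu : 0 < u) (hfix : p = u • T p) :
    coneSpectralRadius Tinf ≤ u⁻¹ := by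
  have hTp : T p = u⁻¹ • p := (eq_inv_smul_iff₀ hu.ne').2 hfix.symm
  refine coneSpectralRadius_le_of_le_smul (hT.monotoneOn hmono) (fun c hc x hx => hT.map_smul hc hx)
    hp (inv_nonneg.2 hu.le) ?_
  exact hTp ▸ hT.le_of_smul_le hsub fun i => (hp i).le

end IsAsymptoticMap

theorem apply_pos_of_nonneg_of_ne_zero {ν : (ι → ℝ) → ℝ} (hν0 : ∀ x, ν x = 0 ↔ x = 0)
    (hνm : ∀ x y : ι → ℝ, 0 ≤ x → x ≤ y → ν x ≤ ν y) {x : ι → ℝ} (hx : 0 ≤ x) (hx0 : x ≠ 0) :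
    0 < ν x :=
  ((hν0 0).2 rfl ▸ hνm 0 x le_rfl hx).lt_of_ne fun h => hx0 ((hν0 x).1 h.symm)

theorem stmt15_general {N : ℕ} (T : (Fin N → ℝ) → (Fin N → ℝ))
    (hpos : ∀ x : Fin N → ℝ, 0 ≤ x → ∀ i, 0 < T x i)
    (hmono : ∀ x y : Fin N → ℝ, 0 ≤ x → x ≤ y → T x ≤ T y)
    (hscal : ∀ x : Fin N → ℝ, 0 ≤ x → ∀ α : ℝ, 1 < α → ∀ i, T (α • x) i < α * T x i)
    (νa νb : (Fin N → ℝ) → ℝ)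
    (hνb0 : ∀ x, νb x = 0 ↔ x = 0)
    (hνbs : ∀ (a : ℝ) (x : Fin N → ℝ), νb (a • x) = |a| * νb x)
    (hνbm : ∀ x y : Fin N → ℝ, 0 ≤ x → x ≤ y → νb x ≤ νb y)
    (Tinf : (Fin N → ℝ) → (Fin N → ℝ))
    (hTinf : ∀ x : Fin N → ℝ, 0 ≤ x → ∀ i,
      Tendsto (fun h : ℝ => T (h • x) i / h) atTop (nhds (Tinf x i)))
    (laminf : ℝ)
    (hrad : laminf = sSup {μ : ℝ | 0 ≤ μ ∧
      ∃ x : Fin N → ℝ, 0 ≤ x ∧ x ≠ 0 ∧ Tinf x = μ • x})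
    (hlaminf_pos : 0 < laminf)
    (P : ℝ → Fin N → ℝ) (U : ℝ → ℝ)
    (hsol : ∀ q : ℝ, 0 < q →
      (∀ i, 0 < P q i) ∧ 0 < U q ∧ P q = U q • T (P q) ∧ νa (P q) = q)
    (E : ℝ → ℝ) (hE : ∀ q : ℝ, E q = U q / νb (P q))
    (α : ℝ) (hab : ∀ x : Fin N → ℝ, νa x ≤ α * νb x) :
    ∀ q : ℝ, 0 < q → E q ≤ min (1 / νb (T 0)) (α / (laminf * q)) := by
  intro q hq
  obtain ⟨hP, hU, hfix, hPa⟩ := hsol q hq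
  have hP0 : 0 ≤ P q := fun i => (hP i).le
  have hlam : laminf ≤ (U q)⁻¹ :=
    hrad ▸ IsAsymptoticMap.coneSpectralRadius_le_inv_of_eq_smul hTinf
      (fun x hx y _ hxy => hmono x y hx hxy) (fun x hx h hh i => (hscal x hx h hh i).le) hP hU hfix
  have : Nonempty (Fin N) := nonempty_of_coneSpectralRadius_pos (hrad ▸ hlaminf_pos)
  have hT0 : 0 < νb (T 0) :=
    apply_pos_of_nonneg_of_ne_zero hνb0 hνbm (fun i => (hpos 0 le_rfl i).le)
      (Function.ne_iff.2 ⟨Classical.arbitrary _, (hpos 0 le_rfl _).ne'⟩)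
  have hT0P : νb (T 0) ≤ νb (T (P q)) :=
    hνbm _ _ (fun i => (hpos 0 le_rfl i).le) (hmono 0 _ le_rfl hP0)
  have hνbP : νb (P q) = U q * νb (T (P q)) := by
    conv_lhs => rw [hfix]
    rw [hνbs, abs_of_pos hU]
  rw [hE, hνbP, div_mul_cancel_left₀ hU.ne', ← one_div]
  refine le_min (one_div_le_one_div_of_le hT0 hT0P) ?_
  have hq_le : q ≤ U q * (α * νb (T (P q))) := by
    simpa [hPa, hνbP, mul_left_comm] using hab (P q)
  have hαT : 0 < α * νb (T (P q)) := pos_of_mul_pos_right (hq.trans_le hq_le) hU.le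
  have hlamU : laminf * U q ≤ 1 := by
    simpa [hU.ne'] using mul_le_mul_of_nonneg_right hlam hU.le
  rw [div_le_div_iff₀ (hT0.trans_le hT0P) (mul_pos hlaminf_pos hq), one_mul]
  nlinarith [mul_le_mul_of_nonneg_left hq_le hlaminf_pos.le,
    mul_le_mul_of_nonneg_right hlamU hαT.le]

/-- Upper bound on the ‖·‖_b-efficiency of the canonical max-min
utility problem: E(p̄) ≤ min{1/‖T(0)‖_b, α/(λ_∞ p̄)} for every p̄ > 0, where
α > 0 satisfies ‖x‖_a ≤ α‖x‖_b for all x. -/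
theorem stmt15 {N : ℕ} (T : (Fin N → ℝ) → (Fin N → ℝ))
    (hpos : ∀ x : Fin N → ℝ, 0 ≤ x → ∀ i, 0 < T x i)
    (hmono : ∀ x y : Fin N → ℝ, 0 ≤ x → x ≤ y → T x ≤ T y)
    (hscal : ∀ x : Fin N → ℝ, 0 ≤ x → ∀ α : ℝ, 1 < α → ∀ i, T (α • x) i < α * T x i)
    (hcont : ContinuousOn T {x : Fin N → ℝ | 0 ≤ x})
    (νa νb : (Fin N → ℝ) → ℝ)
    (hνa0 : ∀ x, νa x = 0 ↔ x = 0)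
    (hνas : ∀ (a : ℝ) (x : Fin N → ℝ), νa (a • x) = |a| * νa x)
    (hνat : ∀ x y : Fin N → ℝ, νa (x + y) ≤ νa x + νa y)
    (hνam : ∀ x y : Fin N → ℝ, 0 ≤ x → x ≤ y → νa x ≤ νa y)
    (hνb0 : ∀ x, νb x = 0 ↔ x = 0)
    (hνbs : ∀ (a : ℝ) (x : Fin N → ℝ), νb (a • x) = |a| * νb x)
    (hνbt : ∀ x y : Fin N → ℝ, νb (x + y) ≤ νb x + νb y)
    (hνbm : ∀ x y : Fin N → ℝ, 0 ≤ x → x ≤ y → νb x ≤ νb y)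
    (Tinf : (Fin N → ℝ) → (Fin N → ℝ))
    (hTinf : ∀ x : Fin N → ℝ, 0 ≤ x → ∀ i,
      Tendsto (fun h : ℝ => T (h • x) i / h) atTop (nhds (Tinf x i)))
    (laminf : ℝ)
    (hrad : laminf = sSup {μ : ℝ | 0 ≤ μ ∧
      ∃ x : Fin N → ℝ, 0 ≤ x ∧ x ≠ 0 ∧ Tinf x = μ • x})
    (hlaminf_pos : 0 < laminf)
    (P : ℝ → Fin N → ℝ) (U : ℝ → ℝ)
    (hsol : ∀ q : ℝ, 0 < q →
      (∀ i, 0 < P q i) ∧ 0 < U q ∧ P q = U q • T (P q) ∧ νa (P q) = q)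
    (E : ℝ → ℝ) (hE : ∀ q : ℝ, E q = U q / νb (P q))
    (α : ℝ) (hα : 0 < α) (hab : ∀ x : Fin N → ℝ, νa x ≤ α * νb x) :
    ∀ q : ℝ, 0 < q → E q ≤ min (1 / νb (T 0)) (α / (laminf * q)) :=
  stmt15_general T hpos hmono hscal νa νb hνb0 hνbs hνbm Tinf hTinf laminf hrad hlaminf_pos P U hsol
    E hE α hab
end
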